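/- arXiv:1401.6220 — 8 statements merged into one kernel-verified Lean document; each statement's English description precedes it below -/
import Mathlib

section
/- Let τ > 0, a ∈ ℝ, n ∈ ℕ, and let u, g : ℝ → ℝ be measurable functions such that for almost every θ ∈ [a, a+τ] one has Σ_{i=0}^{n} u(θ + iτ) = g(θ). Then ∫_a^{a+(n+1)τ} u(t)² dt ≥ (1/(n+1)) · ∫_a^{a+τ} g(θ)² dθ, where both integrals are Lebesgue integrals of nonnegative functions with values in [0, ∞]. -/
/-!
Cut `[a, a + (n+1)τ)` into the `n + 1` translates `[a, a + τ) + iτ` and pull each back to the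
first period: the left-hand side becomes `∫_a^{a+τ} ∑ᵢ u(θ + iτ)² dθ`. Pointwise, Cauchy–Schwarz
gives `g(θ)² = (∑ᵢ u(θ + iτ))² ≤ (n + 1) ∑ᵢ u(θ + iτ)²` for almost every `θ`.
-/

open MeasureTheory
open scoped ENNReal

theorem setLIntegral_Ico_eq_sum_Ico {τ : ℝ} (hτ : 0 ≤ τ) (a : ℝ) (f : ℝ → ℝ≥0∞) (m : ℕ) :
    ∫⁻ t in Set.Ico a (a + m * τ), f t =
      ∑ i ∈ Finset.range m, ∫⁻ t in Set.Ico (a + i * τ) (a + (i + 1) * τ), f t := by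
  induction m with
  | zero => simp
  | succ m ih =>
    have hsplit : Set.Ico a (a + (m + 1 : ℕ) * τ) =
        Set.Ico a (a + m * τ) ∪ Set.Ico (a + m * τ) (a + (m + 1) * τ) := by
      push_cast
      exact (Set.Ico_union_Ico_eq_Ico (by nlinarith [m.cast_nonneg (α := ℝ)]) (by nlinarith)).symm
    rw [hsplit, lintegral_union measurableSet_Ico Set.Ico_disjoint_Ico_same,
      ih, Finset.sum_range_succ]

theorem setLIntegral_Ico_add_mul_eq (τ a c : ℝ) (f : ℝ → ℝ≥0∞) :
    ∫⁻ t in Set.Ico (a + c * τ) (a + (c + 1) * τ), f t =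
      ∫⁻ θ in Set.Ico a (a + τ), f (θ + c * τ) := by
  have h := (measurePreserving_add_right volume (c * τ)).setLIntegral_comp_emb
    (measurableEmbedding_addRight _) f (Set.Ico a (a + τ))
  rw [Set.image_add_const_Ico] at h
  rw [h, show a + (c + 1) * τ = a + τ + c * τ by ring]

theorem setLIntegral_Ico_eq_lintegral_sum_translates {τ : ℝ} (hτ : 0 ≤ τ) (a : ℝ)
    {f : ℝ → ℝ≥0∞} (hf : Measurable f) (m : ℕ) :
    ∫⁻ t in Set.Ico a (a + m * τ), f t =
      ∫⁻ θ in Set.Ico a (a + τ), ∑ i ∈ Finset.range m, f (θ + i * τ) := by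
  rw [setLIntegral_Ico_eq_sum_Ico hτ, lintegral_finsetSum (f := fun (i : ℕ) θ => f (θ + i * τ))
    _ fun i _ => hf.comp (measurable_add_const _)]
  exact Finset.sum_congr rfl fun i _ => setLIntegral_Ico_add_mul_eq τ a i f

theorem ENNReal.ofReal_sq_sum_le {ι : Type*} (s : Finset ι) (x : ι → ℝ) :
    ENNReal.ofReal ((∑ i ∈ s, x i) ^ 2) ≤ s.card * ∑ i ∈ s, ENNReal.ofReal (x i ^ 2) := by
  calc ENNReal.ofReal ((∑ i ∈ s, x i) ^ 2)
      ≤ ENNReal.ofReal (s.card * ∑ i ∈ s, x i ^ 2) :=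
        ENNReal.ofReal_le_ofReal sq_sum_le_card_mul_sum_sq
    _ = s.card * ∑ i ∈ s, ENNReal.ofReal (x i ^ 2) := by
        rw [ENNReal.ofReal_mul (by positivity), ENNReal.ofReal_natCast,
          ENNReal.ofReal_sum_of_nonneg fun i _ => sq_nonneg _]

theorem sum_constraint_sq_integral_lower_bound_general
    (τ a : ℝ) (hτ : 0 < τ) (n : ℕ) (u g : ℝ → ℝ)
    (hu : Measurable u)
    (hsum : ∀ᵐ θ ∂(volume.restrict (Set.Icc a (a + τ))),
      (∑ i ∈ Finset.range (n + 1), u (θ + i * τ)) = g θ) :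
    (∫⁻ t in Set.Icc a (a + (n + 1) * τ), ENNReal.ofReal (u t ^ 2)) ≥
      (((n : ℝ≥0∞) + 1))⁻¹ * ∫⁻ θ in Set.Icc a (a + τ), ENNReal.ofReal (g θ ^ 2) := by
  have hunfold := setLIntegral_Ico_eq_lintegral_sum_translates hτ.le a
    (hu.pow_const 2).ennreal_ofReal (n + 1)
  push_cast at hunfold
  rw [← restrict_Ico_eq_restrict_Icc, hunfold, ge_iff_le,
    ENNReal.inv_mul_le_iff (by positivity) (by simp), ← restrict_Ico_eq_restrict_Icc,
    ← lintegral_const_mul' _ _ (by simp)]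
  refine lintegral_mono_ae ?_
  rw [restrict_Ico_eq_restrict_Icc]
  filter_upwards [hsum] with θ hθ
  simpa [← hθ] using ENNReal.ofReal_sq_sum_le (Finset.range (n + 1)) fun i => u (θ + i * τ)

/-- Core optimization lemma underlying Theorem 1: if the sums of `u` over a τ-grid of
`n+1` points are prescribed a.e. on `[a, a+τ]` by `g`, then the squared L² norm of `u`
over `[a, a+(n+1)τ]` is at least `1/(n+1)` times the squared L² norm of `g` over one
period. -/
theorem sum_constraint_sq_integral_lower_bound
    (τ a : ℝ) (hτ : 0 < τ) (n : ℕ) (u g : ℝ → ℝ)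
    (hu : Measurable u) (hg : Measurable g)
    (hsum : ∀ᵐ θ ∂(volume.restrict (Set.Icc a (a + τ))),
      (∑ i ∈ Finset.range (n + 1), u (θ + i * τ)) = g θ) :
    (∫⁻ t in Set.Icc a (a + (n + 1) * τ), ENNReal.ofReal (u t ^ 2)) ≥
      (((n : ℝ≥0∞) + 1))⁻¹ * ∫⁻ θ in Set.Icc a (a + τ), ENNReal.ofReal (g θ ^ 2) :=
  sum_constraint_sq_integral_lower_bound_general τ a hτ n u g hu hsum
end

section
/- For every candidate trajectory x, J(x*) ≤ J(x); that is, the Gluskabi raccordation x* minimizes the persistence cost J(x) = ∫_a^{b+τ} (x(t) − x(t−τ))² dt over all measurable functions agreeing with x^a on (−∞, a] and with x^b on [b, ∞). (Theorem 1 of the paper.) -/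
open MeasureTheory Set Function Finset
open scoped ENNReal

/-!
Substituting `t = s + (k + 1) τ` with `s ∈ (a - τ, a]` turns the cost of a candidate `x` into the
integral over one period of `∑_{k ≤ n} (w (k+1) - w k)²`, where `w k = x (s + k τ)`. Every candidate has
`w 0 = xa s` and, by periodicity, `w (n+1) = xb s`, so by Cauchy–Schwarz the integrand is at least
`(xb s - xa s)² / (n + 1)`. The raccordation attains this bound for almost every `s`: along each orbit
its values form the arithmetic progression from `xa s` to `xb s`.
-/

section Lintegral

variable {α ι : Type*} [MeasurableSpace α] {μ : Measure α}

theorem sum_lintegral_le_lintegral_sum (s : Finset ι) (f : ι → α → ℝ≥0∞) :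
    ∑ i ∈ s, ∫⁻ a, f i a ∂μ ≤ ∫⁻ a, ∑ i ∈ s, f i a ∂μ := by
  classical
  induction s using Finset.induction_on with
  | empty => simp
  | insert i s hi ih =>
    simp only [Finset.sum_insert hi]
    exact (add_le_add_right ih _).trans (le_lintegral_add _ _)

theorem sum_lintegral_le_sum_lintegral_of_ae_sum_le (s : Finset ι) {f g : ι → α → ℝ≥0∞}
    (hg : ∀ i ∈ s, Measurable (g i)) (h : ∀ᵐ a ∂μ, ∑ i ∈ s, f i a ≤ ∑ i ∈ s, g i a) :
    ∑ i ∈ s, ∫⁻ a, f i a ∂μ ≤ ∑ i ∈ s, ∫⁻ a, g i a ∂μ :=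
  calc ∑ i ∈ s, ∫⁻ a, f i a ∂μ ≤ ∫⁻ a, ∑ i ∈ s, f i a ∂μ := sum_lintegral_le_lintegral_sum s f
    _ ≤ ∫⁻ a, ∑ i ∈ s, g i a ∂μ := lintegral_mono_ae h
    _ = ∑ i ∈ s, ∫⁻ a, g i a ∂μ := lintegral_finsetSum s hg

end Lintegral

theorem setLIntegral_Ioc_comp_add_right (g : ℝ → ℝ≥0∞) (u v c : ℝ) :
    ∫⁻ s in Ioc u v, g (s + c) = ∫⁻ t in Ioc (u + c) (v + c), g t := by
  simpa [image_add_const_Ioc] using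
    (measurePreserving_add_right (volume : Measure ℝ) c).setLIntegral_comp_emb
      (MeasurableEquiv.addRight c).measurableEmbedding g (Ioc u v)

theorem setLIntegral_Ioc_eq_sum_nat_mul (g : ℝ → ℝ≥0∞) {τ : ℝ} (hτ : 0 ≤ τ) (c : ℝ) (m : ℕ) :
    ∫⁻ t in Ioc c (c + m * τ), g t = ∑ k ∈ range m, ∫⁻ s in Ioc c (c + τ), g (s + k * τ) := by
  induction m with
  | zero => simp
  | succ m ih =>
    have h₁ : c ≤ c + m * τ := le_add_of_nonneg_right (by positivity)
    have h₂ : c + m * τ ≤ c + (m + 1 : ℕ) * τ := by push_cast; linarith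
    rw [← Ioc_union_Ioc_eq_Ioc h₁ h₂, lintegral_union measurableSet_Ioc
      (Ioc_disjoint_Ioc_of_le le_rfl), ih, sum_range_succ, setLIntegral_Ioc_comp_add_right]
    congr 4; push_cast; ring

theorem setLIntegral_Ioc_sq_sub_eq_sum (y : ℝ → ℝ) {τ : ℝ} (hτ : 0 ≤ τ) (a : ℝ) (m : ℕ) :
    ∫⁻ t in Ioc a (a + m * τ), ENNReal.ofReal ((y t - y (t - τ)) ^ 2) =
      ∑ k ∈ range m, ∫⁻ s in Ioc (a - τ) a,
        ENNReal.ofReal ((y (s + (k + 1 : ℕ) * τ) - y (s + k * τ)) ^ 2) := by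
  have hshift := setLIntegral_Ioc_comp_add_right
    (fun t => ENNReal.ofReal ((y t - y (t - τ)) ^ 2)) (a - τ) (a - τ + m * τ) τ
  rw [show a - τ + τ = a by ring, show a - τ + m * τ + τ = a + m * τ by ring] at hshift
  rw [← hshift, setLIntegral_Ioc_eq_sum_nat_mul _ hτ, show a - τ + τ = a by ring]
  refine sum_congr rfl fun k _ => setLIntegral_congr_fun measurableSet_Ioc fun s _ => ?_
  congr 4 <;> push_cast <;> ring

/-- By Cauchy–Schwarz, `(w m - w 0)² ≤ m ∑ (w (k+1) - w k)²`, with equality for arithmetic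
progressions. -/
theorem sum_sq_sub_le_of_sub_eq_const {v w : ℕ → ℝ} {m : ℕ} {d : ℝ}
    (hv : ∀ k < m, v (k + 1) - v k = d) (h₀ : v 0 = w 0) (hm : v m = w m) :
    ∑ k ∈ range m, (v (k + 1) - v k) ^ 2 ≤ ∑ k ∈ range m, (w (k + 1) - w k) ^ 2 := by
  have hsum_v : ∑ k ∈ range m, (v (k + 1) - v k) ^ 2 = m * d ^ 2 := by
    rw [sum_congr rfl fun k hk => by rw [hv k (mem_range.mp hk)]]
    simp
  have htel : w m - w 0 = m * d := by
    rw [← h₀, ← hm, ← sum_range_sub v, sum_congr rfl fun k hk => hv k (mem_range.mp hk)]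
    simp
  have hcs := sq_sum_le_card_mul_sum_sq (s := range m) (f := fun k => w (k + 1) - w k)
  rw [sum_range_sub w, htel, card_range] at hcs
  rw [hsum_v]
  rcases Nat.eq_zero_or_pos m with rfl | hm_pos
  · simp
  · have : (0 : ℝ) < m := Nat.cast_pos.mpr hm_pos
    nlinarith

section Raccordation

variable {τ a b : ℝ} {n : ℕ} {xa xb y : ℝ → ℝ} {s : ℝ}

theorem apply_add_nat_mul_eq_of_eqOn_Ici (hxb_per : Periodic xb τ)
    (hy_b : ∀ t, b ≤ t → y t = xb t) {k : ℕ} (hk : b ≤ s + k * τ) : y (s + k * τ) = xb s := by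
  rw [hy_b _ hk, hxb_per.nat_mul k s]

theorem floor_sub_div_eq (hτ : 0 < τ) (hs : s ∈ Ico (a - τ) a) (k : ℕ) :
    ⌊(s + k * τ - a) / τ⌋ = (k : ℤ) - 1 := by
  obtain ⟨hs₁, hs₂⟩ := hs
  rw [Int.floor_eq_iff, le_div_iff₀ hτ, div_lt_iff₀ hτ]
  push_cast
  constructor <;> nlinarith

theorem raccordation_apply_add_nat_mul (hτ : 0 < τ) (hb : b = a + n * τ)
    (hxa_per : Periodic xa τ) (hxb_per : Periodic xb τ) (xstar : ℝ → ℝ)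
    (hxstar_a : ∀ t, t ≤ a → xstar t = xa t)
    (hxstar_mid : ∀ t, a < t → t < b →
      xstar t = xa t + (1 + (⌊(t - a) / τ⌋ : ℝ)) * (xb t - xa t) / (n + 1))
    (hxstar_b : ∀ t, b ≤ t → xstar t = xb t)
    (hs : s ∈ Ioo (a - τ) a) {k : ℕ} (hk : k ≤ n + 1) :
    xstar (s + k * τ) = xa s + k * ((xb s - xa s) / (n + 1)) := by
  obtain ⟨hs₁, hs₂⟩ := hs
  rcases Nat.eq_zero_or_pos k with rfl | hk₀
  · simp [hxstar_a s hs₂.le]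
  rcases hk.eq_or_lt with rfl | hkn
  · rw [apply_add_nat_mul_eq_of_eqOn_Ici hxb_per hxstar_b (by rw [hb]; push_cast; nlinarith)]
    push_cast
    field_simp
    ring
  have hk_bounds : (1 : ℝ) ≤ k ∧ (k : ℝ) ≤ n := by
    constructor <;> exact_mod_cast (by omega)
  rw [hxstar_mid _ (by nlinarith) (by rw [hb]; nlinarith), floor_sub_div_eq hτ ⟨hs₁.le, hs₂⟩ k,
    hxa_per.nat_mul k s, hxb_per.nat_mul k s]
  push_cast
  ring

end Raccordation

theorem gluskabi_raccordation_minimizes_general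
    (τ a b : ℝ) (hτ : 0 < τ) (n : ℕ) (hb : b = a + n * τ)
    (xa xb : ℝ → ℝ)
    (hxa_per : ∀ t, xa (t + τ) = xa t) (hxb_per : ∀ t, xb (t + τ) = xb t)
    (xstar : ℝ → ℝ)
    (hxstar_a : ∀ t, t ≤ a → xstar t = xa t)
    (hxstar_mid : ∀ t, a < t → t < b →
      xstar t = xa t + (1 + (⌊(t - a) / τ⌋ : ℝ)) * (xb t - xa t) / (n + 1))
    (hxstar_b : ∀ t, b ≤ t → xstar t = xb t)
    (x : ℝ → ℝ) (hx : Measurable x)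
    (hx_a : ∀ t, t ≤ a → x t = xa t) (hx_b : ∀ t, b ≤ t → x t = xb t) :
    (∫⁻ t in Set.Ioc a (b + τ), ENNReal.ofReal ((xstar t - xstar (t - τ)) ^ 2)) ≤
      ∫⁻ t in Set.Ioc a (b + τ), ENNReal.ofReal ((x t - x (t - τ)) ^ 2) := by
  rw [show b + τ = a + (n + 1 : ℕ) * τ by rw [hb]; push_cast; ring,
    setLIntegral_Ioc_sq_sub_eq_sum _ hτ.le, setLIntegral_Ioc_sq_sub_eq_sum _ hτ.le]
  refine sum_lintegral_le_sum_lintegral_of_ae_sum_le _ (fun k _ => by fun_prop) ?_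
  rw [Measure.restrict_congr_set Ioo_ae_eq_Ioc.symm]
  refine ae_restrict_of_forall_mem measurableSet_Ioo fun s hs => ?_
  have hstar k (hk : k ≤ n + 1) := raccordation_apply_add_nat_mul hτ hb hxa_per hxb_per xstar
    hxstar_a hxstar_mid hxstar_b hs hk
  rw [← ENNReal.ofReal_sum_of_nonneg fun _ _ => sq_nonneg _,
    ← ENNReal.ofReal_sum_of_nonneg fun _ _ => sq_nonneg _]
  refine ENNReal.ofReal_le_ofReal <| sum_sq_sub_le_of_sub_eq_const
    (v := fun k : ℕ => xstar (s + k * τ)) (w := fun k : ℕ => x (s + k * τ))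
    (d := (xb s - xa s) / (n + 1)) (fun k hk => ?_) ?_ ?_
  · rw [hstar (k + 1) hk, hstar k hk.le]
    push_cast
    ring
  · simp [hxstar_a s hs.2.le, hx_a s hs.2.le]
  · rw [hstar (n + 1) le_rfl, apply_add_nat_mul_eq_of_eqOn_Ici hxb_per hx_b
      (by rw [hb]; push_cast; nlinarith [hs.1])]
    push_cast
    field_simp
    ring

/-- Theorem 1 of the paper: the Gluskabi raccordation `xstar` minimizes the persistence
cost `J x = ∫_a^{b+τ} (x t - x (t-τ))² dt` over all measurable candidate trajectories
agreeing with the τ-periodic `xa` on `(-∞, a]` and with the τ-periodic `xb` on `[b, ∞)`,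
where `b = a + n τ`. -/
theorem gluskabi_raccordation_minimizes
    (τ a b : ℝ) (hτ : 0 < τ) (n : ℕ) (hn : 1 ≤ n) (hb : b = a + n * τ)
    (xa xb : ℝ → ℝ) (hxa : Continuous xa) (hxb : Continuous xb)
    (hxa_per : ∀ t, xa (t + τ) = xa t) (hxb_per : ∀ t, xb (t + τ) = xb t)
    (xstar : ℝ → ℝ)
    (hxstar_a : ∀ t, t ≤ a → xstar t = xa t)
    (hxstar_mid : ∀ t, a < t → t < b →
      xstar t = xa t + (1 + (⌊(t - a) / τ⌋ : ℝ)) * (xb t - xa t) / (n + 1))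
    (hxstar_b : ∀ t, b ≤ t → xstar t = xb t)
    (x : ℝ → ℝ) (hx : Measurable x)
    (hx_a : ∀ t, t ≤ a → x t = xa t) (hx_b : ∀ t, b ≤ t → x t = xb t) :
    (∫⁻ t in Set.Ioc a (b + τ), ENNReal.ofReal ((xstar t - xstar (t - τ)) ^ 2)) ≤
      ∫⁻ t in Set.Ioc a (b + τ), ENNReal.ofReal ((x t - x (t - τ)) ^ 2) :=
  gluskabi_raccordation_minimizes_general τ a b hτ n hb xa xb hxa_per hxb_per xstar hxstar_a
    hxstar_mid hxstar_b x hx hx_a hx_b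
end

section
/- The minimal persistence cost equals J(x*) = (1/(n+1)) · ∫_a^{a+τ} (x^b(θ) − x^a(θ))² dθ. -/
open MeasureTheory Set
open scoped ENNReal

/-!
Off the grid `a + τℤ`, the raccordation is `x^a + k(t) (x^b - x^a) / (n + 1)`, where the stage
index `k(t)` is `⌈(t - a) / τ⌉` clamped to `[0, n + 1]`. On `(a, b + τ]` a shift by `τ` lowers the
stage index by exactly one, so by periodicity the integrand of `J` is a.e.
`(x^b - x^a)² / (n + 1)²`; and `(a, b + τ]` consists of `n + 1` periods.
-/

theorem setLIntegral_Ioc_add_const (f : ℝ → ℝ≥0∞) (a b c : ℝ) :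
    ∫⁻ t in Ioc (a + c) (b + c), f t = ∫⁻ t in Ioc a b, f (t + c) := by
  rw [(measurePreserving_add_right volume c).setLIntegral_comp_emb
    (measurableEmbedding_addRight c), image_add_const_Ioc]

theorem Function.Periodic.setLIntegral_Ioc_add_nat_mul {f : ℝ → ℝ≥0∞} {T : ℝ}
    (hf : Function.Periodic f T) (hT : 0 ≤ T) (a : ℝ) (m : ℕ) :
    ∫⁻ t in Ioc a (a + m * T), f t = m * ∫⁻ t in Ioc a (a + T), f t := by
  induction m with
  | zero => simp
  | succ m ih =>
    have hsplit : Ioc a (a + (m + 1 : ℕ) * T) =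
        Ioc a (a + m * T) ∪ Ioc (a + m * T) (a + T + m * T) := by
      rw [Ioc_union_Ioc_eq_Ioc (by nlinarith [m.cast_nonneg (α := ℝ)]) (by linarith)]
      push_cast
      ring_nf
    rw [hsplit, lintegral_union measurableSet_Ioc (Ioc_disjoint_Ioc_of_le le_rfl),
      setLIntegral_Ioc_add_const, ih]
    simp_rw [show ∀ t, f (t + m * T) = f t from hf.nat_mul m]
    push_cast
    ring

theorem ae_div_notMem_range_intCast {τ : ℝ} (hτ : τ ≠ 0) (a : ℝ) :
    ∀ᵐ t, (t - a) / τ ∉ range ((↑) : ℤ → ℝ) := by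
  have hgrid : {t : ℝ | (t - a) / τ ∈ range ((↑) : ℤ → ℝ)} ⊆ range fun k : ℤ => a + k * τ := by
    rintro t ⟨k, hk⟩
    exact ⟨k, by field_simp at hk; linarith⟩
  exact measure_eq_zero_iff_ae_notMem.1 (((countable_range _).mono hgrid).measure_zero volume)

noncomputable def stageIndex (a τ : ℝ) (n : ℕ) (t : ℝ) : ℤ := max 0 (min ⌈(t - a) / τ⌉ (n + 1))

theorem stageIndex_sub_stageIndex_sub {a τ t : ℝ} {n : ℕ} (hτ : 0 < τ)
    (ht : t ∈ Ioc a (a + (n + 1) * τ)) :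
    stageIndex a τ n t - stageIndex a τ n (t - τ) = 1 := by
  have hshift : ⌈(t - τ - a) / τ⌉ = ⌈(t - a) / τ⌉ - 1 := by
    rw [← Int.ceil_sub_one]
    congr 1
    field_simp
    ring
  have hpos : 1 ≤ ⌈(t - a) / τ⌉ := Int.one_le_ceil_iff.2 (div_pos (by linarith [ht.1]) hτ)
  have hle : ⌈(t - a) / τ⌉ ≤ n + 1 := by
    rw [Int.ceil_le, div_le_iff₀ hτ]
    push_cast
    linarith [ht.2]
  simp only [stageIndex, hshift]
  omega

theorem eq_add_stageIndex_mul {τ a b : ℝ} (hτ : 0 < τ) {n : ℕ} (hb : b = a + n * τ)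
    {xa xb xstar : ℝ → ℝ}
    (hxstar_a : ∀ t, t ≤ a → xstar t = xa t)
    (hxstar_mid : ∀ t, a < t → t < b →
      xstar t = xa t + (1 + (⌊(t - a) / τ⌋ : ℝ)) * (xb t - xa t) / (n + 1))
    (hxstar_b : ∀ t, b ≤ t → xstar t = xb t) {t : ℝ} (ht : (t - a) / τ ∉ range ((↑) : ℤ → ℝ)) :
    xstar t = xa t + stageIndex a τ n t * (xb t - xa t) / (n + 1) := by
  rcases le_or_gt t a with hta | hat
  · have hceil : ⌈(t - a) / τ⌉ ≤ 0 := Int.ceil_le.2 <| by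
      rw [Int.cast_zero]
      exact div_nonpos_of_nonpos_of_nonneg (by linarith) hτ.le
    have hstage : stageIndex a τ n t = 0 := by simp only [stageIndex]; omega
    simp [hxstar_a t hta, hstage]
  rcases lt_or_ge t b with htb | hbt
  · have hceil := (Int.ceil_eq_floor_add_one_iff_notMem _).2 ht
    have hpos : 1 ≤ ⌈(t - a) / τ⌉ := Int.one_le_ceil_iff.2 (div_pos (by linarith) hτ)
    have hle : ⌈(t - a) / τ⌉ ≤ n := by
      rw [Int.ceil_le, div_le_iff₀ hτ]
      push_cast
      linarith
    have hstage : stageIndex a τ n t = 1 + ⌊(t - a) / τ⌋ := by simp only [stageIndex]; omega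
    rw [hxstar_mid t hat htb, hstage]
    push_cast
    ring
  · have hne : (t - a) / τ ≠ n := fun h => ht ⟨n, by rw [h]; push_cast; ring⟩
    have hgt : (n : ℝ) < (t - a) / τ :=
      lt_of_le_of_ne (by rw [le_div_iff₀ hτ]; linarith) hne.symm
    have hceil : (n : ℤ) < ⌈(t - a) / τ⌉ := Int.lt_ceil.2 (by exact_mod_cast hgt)
    have hstage : stageIndex a τ n t = n + 1 := by simp only [stageIndex]; omega
    rw [hxstar_b t hbt, hstage]
    push_cast
    field_simp
    ring

theorem sub_sub_eq_of_eq_add_stageIndex_mul {τ a : ℝ} (hτ : 0 < τ) {n : ℕ} {xa xb x : ℝ → ℝ}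
    (hxa : Function.Periodic xa τ) (hxb : Function.Periodic xb τ)
    (hx : ∀ t, (t - a) / τ ∉ range ((↑) : ℤ → ℝ) →
      x t = xa t + stageIndex a τ n t * (xb t - xa t) / (n + 1))
    {t : ℝ} (ht : t ∈ Ioc a (a + (n + 1) * τ)) (hgrid : (t - a) / τ ∉ range ((↑) : ℤ → ℝ)) :
    x t - x (t - τ) = (xb t - xa t) / (n + 1) := by
  have hgrid' : (t - τ - a) / τ ∉ range ((↑) : ℤ → ℝ) := by
    rintro ⟨k, hk⟩
    refine hgrid ⟨k + 1, ?_⟩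
    rw [Int.cast_add, Int.cast_one, hk]
    field_simp
    ring
  have hstage : (stageIndex a τ n t : ℝ) = stageIndex a τ n (t - τ) + 1 := by
    have := stageIndex_sub_stageIndex_sub hτ ht
    exact_mod_cast (by omega : stageIndex a τ n t = stageIndex a τ n (t - τ) + 1)
  rw [hx t hgrid, hx (t - τ) hgrid', hxa.sub_eq, hxb.sub_eq, hstage]
  ring

theorem gluskabi_raccordation_cost_general
    (τ a b : ℝ) (hτ : 0 < τ) (n : ℕ) (hb : b = a + n * τ)
    (xa xb : ℝ → ℝ)
    (hxa_per : ∀ t, xa (t + τ) = xa t) (hxb_per : ∀ t, xb (t + τ) = xb t)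
    (xstar : ℝ → ℝ)
    (hxstar_a : ∀ t, t ≤ a → xstar t = xa t)
    (hxstar_mid : ∀ t, a < t → t < b →
      xstar t = xa t + (1 + (⌊(t - a) / τ⌋ : ℝ)) * (xb t - xa t) / (n + 1))
    (hxstar_b : ∀ t, b ≤ t → xstar t = xb t) :
    (∫⁻ t in Set.Ioc a (b + τ), ENNReal.ofReal ((xstar t - xstar (t - τ)) ^ 2)) =
      (((n : ℝ≥0∞) + 1))⁻¹ *
        ∫⁻ θ in Set.Ioc a (a + τ), ENNReal.ofReal ((xb θ - xa θ) ^ 2) := by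
  have hend : b + τ = a + ((n + 1 : ℕ) : ℝ) * τ := by rw [hb]; push_cast; ring
  have hjump : ∀ᵐ t ∂volume.restrict (Ioc a (b + τ)),
      ENNReal.ofReal ((xstar t - xstar (t - τ)) ^ 2) =
        (((n : ℝ≥0∞) + 1) ^ 2)⁻¹ * ENNReal.ofReal ((xb t - xa t) ^ 2) := by
    filter_upwards [ae_restrict_of_ae (ae_div_notMem_range_intCast hτ.ne' a),
      ae_restrict_mem measurableSet_Ioc] with t hgrid ht
    rw [hend, Nat.cast_add_one] at ht
    rw [sub_sub_eq_of_eq_add_stageIndex_mul hτ hxa_per hxb_per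
        (fun t => eq_add_stageIndex_mul hτ hb hxstar_a hxstar_mid hxstar_b) ht hgrid,
      div_pow, div_eq_inv_mul, ENNReal.ofReal_mul (by positivity),
      ENNReal.ofReal_inv_of_pos (by positivity)]
    norm_cast
  have hper : Function.Periodic (fun t => ENNReal.ofReal ((xb t - xa t) ^ 2)) τ := fun t => by
    simp only [hxa_per, hxb_per]
  rw [lintegral_congr_ae hjump, lintegral_const_mul' _ _ (by simp), hend,
    hper.setLIntegral_Ioc_add_nat_mul hτ.le]
  push_cast
  rw [sq, ENNReal.mul_inv (by simp) (by simp), mul_assoc, ← mul_assoc _ (_ + 1),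
    ENNReal.inv_mul_cancel (by simp) (by simp), one_mul]

/-- The minimal persistence cost of Theorem 1:
`J(x*) = (1/(n+1)) ∫_a^{a+τ} (x^b θ - x^a θ)² dθ`. -/
theorem gluskabi_raccordation_cost
    (τ a b : ℝ) (hτ : 0 < τ) (n : ℕ) (hn : 1 ≤ n) (hb : b = a + n * τ)
    (xa xb : ℝ → ℝ) (hxa : Continuous xa) (hxb : Continuous xb)
    (hxa_per : ∀ t, xa (t + τ) = xa t) (hxb_per : ∀ t, xb (t + τ) = xb t)
    (xstar : ℝ → ℝ)
    (hxstar_a : ∀ t, t ≤ a → xstar t = xa t)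
    (hxstar_mid : ∀ t, a < t → t < b →
      xstar t = xa t + (1 + (⌊(t - a) / τ⌋ : ℝ)) * (xb t - xa t) / (n + 1))
    (hxstar_b : ∀ t, b ≤ t → xstar t = xb t) :
    (∫⁻ t in Set.Ioc a (b + τ), ENNReal.ofReal ((xstar t - xstar (t - τ)) ^ 2)) =
      (((n : ℝ≥0∞) + 1))⁻¹ *
        ∫⁻ θ in Set.Ioc a (a + τ), ENNReal.ofReal ((xb θ - xa θ) ^ 2) :=
  gluskabi_raccordation_cost_general τ a b hτ n hb xa xb hxa_per hxb_per xstar hxstar_a hxstar_mid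
    hxstar_b
end

section
/- For every t ∈ (a, b+τ) that is not of the form a + iτ for an integer i, the Gluskabi raccordation satisfies x*(t) − x*(t−τ) = (x^b(t) − x^a(t))/(n+1); moreover x*(t) − x*(t−τ) = 0 for all t ≤ a and all t > b+τ. (The optimal control profile u of Theorem 1.) -/
/-!
Both periodic profiles are unchanged by a shift of one period, so `x*` can be written as
`x^a + w · (x^b - x^a)` with a weight `w` that is a step function of `t` alone: `0` up to `a`,
`k/(n+1)` on the `k`-th cell `(a + (k-1)τ, a + kτ)`, and `1` from `b` on. Hence
`x*(t) - x*(t - τ) = (w t - w (t - τ)) · (x^b t - x^a t)`, and off the grid the weight climbs by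
exactly one step `1/(n+1)` per period inside `(a, b + τ)` and is constant outside.
-/

open Function

noncomputable def raccordationWeight (τ a b : ℝ) (n : ℕ) (t : ℝ) : ℝ :=
  if t ≤ a then 0 else if t < b then (1 + ⌊(t - a) / τ⌋) / (n + 1) else 1

lemma Function.Periodic.sub_shift_of_eq_add_mul {α R : Type*} [AddGroup α] [CommRing R]
    {xa xb w x : α → R} {τ : α}
    (ha : Periodic xa τ) (hb : Periodic xb τ) (hx : ∀ t, x t = xa t + w t * (xb t - xa t))
    (t : α) : x t - x (t - τ) = (w t - w (t - τ)) * (xb t - xa t) := by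
  rw [hx, hx, ha.sub_eq, hb.sub_eq]
  ring

lemma floor_sub_div_eq_of_le_of_lt {K : Type*} [Field K] [LinearOrder K] [IsStrictOrderedRing K]
    [FloorRing K] {τ a t : K} (hτ : 0 < τ) {k : ℤ}
    (hk : a + k * τ ≤ t) (hk' : t < a + (k + 1) * τ) : ⌊(t - a) / τ⌋ = k := by
  rw [Int.floor_eq_iff, le_div_iff₀ hτ, div_lt_iff₀ hτ]
  constructor <;> linarith

section RaccordationWeight

variable {τ a b : ℝ} {n : ℕ}

lemma raccordationWeight_of_le {t : ℝ} (ht : t ≤ a) : raccordationWeight τ a b n t = 0 :=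
  if_pos ht

lemma raccordationWeight_of_lt_of_lt {t : ℝ} (ha : a < t) (hb : t < b) :
    raccordationWeight τ a b n t = (1 + ⌊(t - a) / τ⌋) / (n + 1) := by
  rw [raccordationWeight, if_neg ha.not_ge, if_pos hb]

lemma raccordationWeight_of_ge (hab : a < b) {t : ℝ} (hb : b ≤ t) :
    raccordationWeight τ a b n t = 1 := by
  rw [raccordationWeight, if_neg (by linarith), if_neg hb.not_gt]

lemma eq_add_raccordationWeight_mul (hab : a < b) {xa xb xstar : ℝ → ℝ}
    (hxstar_a : ∀ t, t ≤ a → xstar t = xa t)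
    (hxstar_mid : ∀ t, a < t → t < b →
      xstar t = xa t + (1 + (⌊(t - a) / τ⌋ : ℝ)) * (xb t - xa t) / (n + 1))
    (hxstar_b : ∀ t, b ≤ t → xstar t = xb t) (t : ℝ) :
    xstar t = xa t + raccordationWeight τ a b n t * (xb t - xa t) := by
  rcases le_or_gt t a with ha | ha
  · rw [hxstar_a t ha, raccordationWeight_of_le ha]
    ring
  rcases lt_or_ge t b with hb | hb
  · rw [hxstar_mid t ha hb, raccordationWeight_of_lt_of_lt ha hb]
    ring
  · rw [hxstar_b t hb, raccordationWeight_of_ge hab hb]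
    ring

lemma raccordationWeight_sub_shift (hτ : 0 < τ) (hn : 1 ≤ n) (hb : b = a + n * τ) {t : ℝ}
    (ha : a < t) (hb' : t < b + τ) (hgrid : ∀ i : ℤ, t ≠ a + i * τ) :
    raccordationWeight τ a b n t - raccordationWeight τ a b n (t - τ) = 1 / (n + 1) := by
  have hnτ : τ ≤ n * τ := le_mul_of_one_le_left hτ.le (by exact_mod_cast hn)
  have hn1 : (0 : ℝ) < n + 1 := by positivity
  rcases lt_or_ge t b with htb | htb
  · rw [raccordationWeight_of_lt_of_lt ha htb]
    rcases lt_or_ge a (t - τ) with ha' | ha'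
    · rw [raccordationWeight_of_lt_of_lt ha' (by linarith)]
      have hfloor : ⌊(t - τ - a) / τ⌋ = ⌊(t - a) / τ⌋ - 1 := by
        rw [← Int.floor_sub_one]
        congr 1
        field_simp
        ring
      rw [hfloor]
      push_cast
      field_simp
      ring
    · have hcell : t < a + τ := lt_of_le_of_ne (by linarith) (by simpa using hgrid 1)
      rw [raccordationWeight_of_le ha', floor_sub_div_eq_of_le_of_lt (k := 0) hτ (by simp; linarith)
        (by simpa using hcell)]
      simp
  · have htb' : b < t := lt_of_le_of_ne htb (by rw [hb]; exact_mod_cast (hgrid n).symm)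
    have hfloor : ⌊(t - τ - a) / τ⌋ = (n : ℤ) - 1 :=
      floor_sub_div_eq_of_le_of_lt hτ (by push_cast; nlinarith) (by push_cast; nlinarith)
    rw [raccordationWeight_of_ge (by linarith) htb,
      raccordationWeight_of_lt_of_lt (by linarith) (by linarith), hfloor]
    push_cast
    field_simp
    ring

end RaccordationWeight

theorem gluskabi_raccordation_control_profile_general
    (τ a b : ℝ) (hτ : 0 < τ) (n : ℕ) (hn : 1 ≤ n) (hb : b = a + n * τ)
    (xa xb : ℝ → ℝ)
    (hxa_per : ∀ t, xa (t + τ) = xa t) (hxb_per : ∀ t, xb (t + τ) = xb t)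
    (xstar : ℝ → ℝ)
    (hxstar_a : ∀ t, t ≤ a → xstar t = xa t)
    (hxstar_mid : ∀ t, a < t → t < b →
      xstar t = xa t + (1 + (⌊(t - a) / τ⌋ : ℝ)) * (xb t - xa t) / (n + 1))
    (hxstar_b : ∀ t, b ≤ t → xstar t = xb t) :
    (∀ t, a < t → t < b + τ → (∀ i : ℤ, t ≠ a + i * τ) →
        xstar t - xstar (t - τ) = (xb t - xa t) / (n + 1)) ∧
      (∀ t, t ≤ a → xstar t - xstar (t - τ) = 0) ∧
      (∀ t, b + τ < t → xstar t - xstar (t - τ) = 0) := by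
  have hab : a < b := by
    rw [hb]
    exact lt_add_of_pos_right a (mul_pos (by exact_mod_cast hn) hτ)
  have hshift := Periodic.sub_shift_of_eq_add_mul hxa_per hxb_per
    (eq_add_raccordationWeight_mul hab hxstar_a hxstar_mid hxstar_b)
  refine ⟨fun t ha hb' hgrid => ?_, fun t ht => ?_, fun t ht => ?_⟩
  · rw [hshift, raccordationWeight_sub_shift hτ hn hb ha hb' hgrid]
    ring
  · rw [hshift, raccordationWeight_of_le ht, raccordationWeight_of_le (by linarith)]
    ring
  · rw [hshift, raccordationWeight_of_ge hab (by linarith), raccordationWeight_of_ge hab (by linarith)]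
    ring

/-- The optimal control profile of Theorem 1: away from the grid points `a + iτ`, the
Gluskabi raccordation satisfies `x*(t) - x*(t-τ) = (x^b(t) - x^a(t))/(n+1)` on
`(a, b+τ)`, and `x*(t) - x*(t-τ) = 0` for `t ≤ a` and for `t > b+τ`. -/
theorem gluskabi_raccordation_control_profile
    (τ a b : ℝ) (hτ : 0 < τ) (n : ℕ) (hn : 1 ≤ n) (hb : b = a + n * τ)
    (xa xb : ℝ → ℝ) (hxa : Continuous xa) (hxb : Continuous xb)
    (hxa_per : ∀ t, xa (t + τ) = xa t) (hxb_per : ∀ t, xb (t + τ) = xb t)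
    (xstar : ℝ → ℝ)
    (hxstar_a : ∀ t, t ≤ a → xstar t = xa t)
    (hxstar_mid : ∀ t, a < t → t < b →
      xstar t = xa t + (1 + (⌊(t - a) / τ⌋ : ℝ)) * (xb t - xa t) / (n + 1))
    (hxstar_b : ∀ t, b ≤ t → xstar t = xb t) :
    (∀ t, a < t → t < b + τ → (∀ i : ℤ, t ≠ a + i * τ) →
        xstar t - xstar (t - τ) = (xb t - xa t) / (n + 1)) ∧
      (∀ t, t ≤ a → xstar t - xstar (t - τ) = 0) ∧
      (∀ t, b + τ < t → xstar t - xstar (t - τ) = 0) :=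
  gluskabi_raccordation_control_profile_general τ a b hτ n hn hb xa xb hxa_per hxb_per xstar
    hxstar_a hxstar_mid hxstar_b
end

section
/- If a candidate trajectory x satisfies J(x) = J(x*), i.e., x achieves the minimal persistence cost, then x(t) = x*(t) for almost every t ∈ ℝ. (Uniqueness of the Gluskabi raccordation of Theorem 1 up to null sets.) -/
open MeasureTheory Set Finset
open scoped ENNReal

/-!
Cut `(a, b + τ]` into the `n + 1` periods `(a + kτ, a + (k+1)τ]` and shift them onto `(a, a + τ]`.
For fixed `s` the increments `d k = x (s + kτ) - x (s + kτ - τ)`, `k ≤ n`, telescope to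
`xb s - xa s` by periodicity, so with `Δ = (xb - xa) / (n + 1)` one has
`∑ d k ^ 2 = ∑ (d k - Δ) ^ 2 + (n + 1) Δ ^ 2`. Hence `J(x) = E(x) + (n + 1) ∫ Δ ^ 2`, where `E(x)`
integrates the deviations, and `x*` is exactly the candidate whose increments all equal `Δ`.
Since the minimum is finite, `J(x) = J(x*)` forces `E(x) = 0`, so a.e. the increments of `x` are
those of `x*`; both start from `xa` before `a`, hence `x = x*` a.e.
-/

theorem setLIntegral_Ioc_add_right (f : ℝ → ℝ≥0∞) (u v c : ℝ) :
    ∫⁻ s in Ioc u v, f (s + c) = ∫⁻ t in Ioc (u + c) (v + c), f t := by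
  have := (measurePreserving_add_right volume c).setLIntegral_comp_preimage_emb
    (measurableEmbedding_addRight c) f (Ioc (u + c) (v + c))
  rwa [preimage_add_const_Ioc, add_sub_cancel_right, add_sub_cancel_right] at this

theorem setLIntegral_Ioc_eq_sum_shift (f : ℝ → ℝ≥0∞) (a : ℝ) {τ : ℝ} (hτ : 0 ≤ τ) (m : ℕ) :
    ∫⁻ t in Ioc a (a + m * τ), f t = ∑ k ∈ range m, ∫⁻ s in Ioc a (a + τ), f (s + k * τ) := by
  induction m with
  | zero => simp
  | succ m ih =>
    have hle : a ≤ a + m * τ := le_add_of_nonneg_right (by positivity)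
    have hle' : a + m * τ ≤ a + (m + 1 : ℕ) * τ := by push_cast; linarith
    have hnext : a + τ + m * τ = a + (m + 1 : ℕ) * τ := by push_cast; ring
    rw [sum_range_succ, ← ih, setLIntegral_Ioc_add_right, hnext,
      ← lintegral_union measurableSet_Ioc (Ioc_disjoint_Ioc_of_le le_rfl),
      Ioc_union_Ioc_eq_Ioc hle hle']

theorem Finset.sum_sq_eq_sum_sq_sub_add {ι R : Type*} [CommRing R] (s : Finset ι) (d : ι → R)
    (c : R) (h : ∑ i ∈ s, d i = #s * c) :
    ∑ i ∈ s, d i ^ 2 = ∑ i ∈ s, (d i - c) ^ 2 + #s * c ^ 2 := by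
  have hexp : ∀ i, (d i - c) ^ 2 = d i ^ 2 - 2 * c * d i + c ^ 2 := fun i => by ring
  simp only [hexp, sum_add_distrib, sum_sub_distrib, ← mul_sum, h, sum_const, nsmul_eq_mul]
  ring

theorem ENNReal.sum_ofReal_sq_eq_of_sum_eq {ι : Type*} (s : Finset ι) (d : ι → ℝ) (c : ℝ)
    (h : ∑ i ∈ s, d i = #s * c) :
    ∑ i ∈ s, ENNReal.ofReal (d i ^ 2) =
      ∑ i ∈ s, ENNReal.ofReal ((d i - c) ^ 2) + #s * ENNReal.ofReal (c ^ 2) := by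
  rw [← ENNReal.ofReal_sum_of_nonneg fun _ _ => sq_nonneg _,
    ← ENNReal.ofReal_sum_of_nonneg fun _ _ => sq_nonneg _, ← ENNReal.ofReal_natCast,
    ← ENNReal.ofReal_mul (by positivity),
    ← ENNReal.ofReal_add (sum_nonneg fun _ _ => sq_nonneg _) (by positivity),
    sum_sq_eq_sum_sq_sub_add s d c h]

theorem sum_range_sub_shift (y : ℝ → ℝ) (s τ : ℝ) (m : ℕ) :
    ∑ k ∈ range m, (y (s + k * τ) - y (s + k * τ - τ)) = y (s + m * τ - τ) - y (s - τ) := by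
  convert sum_range_sub (fun k : ℕ => y (s + k * τ - τ)) m using 4 <;> push_cast <;> ring

theorem eq_of_sub_shift_eq {x y : ℝ → ℝ} {s τ : ℝ} {m : ℕ} (h₀ : x (s - τ) = y (s - τ))
    (h : ∀ k < m, x (s + k * τ) - x (s + k * τ - τ) = y (s + k * τ) - y (s + k * τ - τ))
    {k : ℕ} (hk : k < m) : x (s + k * τ) = y (s + k * τ) := by
  have hx := sum_range_sub_shift x s τ (k + 1)
  have hy := sum_range_sub_shift y s τ (k + 1)
  rw [sum_congr rfl fun j hj => h j (by rw [Finset.mem_range] at hj; omega)] at hx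
  have hend : s + ((k + 1 : ℕ) : ℝ) * τ - τ = s + k * τ := by push_cast; ring
  rw [hend] at hx hy
  linarith

section PersistenceCost

variable {y c : ℝ → ℝ} {a τ : ℝ} {m : ℕ}

theorem lintegral_sq_sub_shift_eq (hy : Measurable y) (hc : Measurable c) (hτ : 0 ≤ τ)
    (hsum : ∀ s ∈ Ioc a (a + τ), y (s + m * τ - τ) - y (s - τ) = m * c s) :
    ∫⁻ t in Ioc a (a + m * τ), ENNReal.ofReal ((y t - y (t - τ)) ^ 2) =
      (∫⁻ s in Ioc a (a + τ), ∑ k ∈ range m,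
          ENNReal.ofReal ((y (s + k * τ) - y (s + k * τ - τ) - c s) ^ 2)) +
        m * ∫⁻ s in Ioc a (a + τ), ENNReal.ofReal (c s ^ 2) := by
  rw [setLIntegral_Ioc_eq_sum_shift _ a hτ, ← lintegral_finsetSum _ fun k _ => by fun_prop,
    ← lintegral_const_mul _ (by fun_prop), ← lintegral_add_right _ (by fun_prop)]
  refine setLIntegral_congr_fun measurableSet_Ioc fun s hs => ?_
  simpa using ENNReal.sum_ofReal_sq_eq_of_sum_eq (range m) _ (c s)
    (by rw [sum_range_sub_shift, hsum s hs, card_range])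

theorem lintegral_sq_sub_shift_eq_iff (hy : Measurable y) (hc : Measurable c) (hτ : 0 ≤ τ)
    (hsum : ∀ s ∈ Ioc a (a + τ), y (s + m * τ - τ) - y (s - τ) = m * c s)
    (hfin : ∫⁻ s in Ioc a (a + τ), ENNReal.ofReal (c s ^ 2) ≠ ∞) :
    ∫⁻ t in Ioc a (a + m * τ), ENNReal.ofReal ((y t - y (t - τ)) ^ 2) =
        m * ∫⁻ s in Ioc a (a + τ), ENNReal.ofReal (c s ^ 2) ↔
      ∀ᵐ s ∂volume.restrict (Ioc a (a + τ)),
        ∀ k < m, y (s + k * τ) - y (s + k * τ - τ) = c s := by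
  have hmin : (m : ℝ≥0∞) * ∫⁻ s in Ioc a (a + τ), ENNReal.ofReal (c s ^ 2) ≠ ∞ :=
    ENNReal.mul_ne_top (ENNReal.natCast_ne_top m) hfin
  rw [lintegral_sq_sub_shift_eq hy hc hτ hsum]
  nth_rw 2 [← zero_add ((m : ℝ≥0∞) * _)]
  rw [ENNReal.add_left_inj hmin, lintegral_eq_zero_iff (by fun_prop)]
  refine Filter.eventually_congr (Filter.Eventually.of_forall fun s => ?_)
  simp [sub_eq_zero]

theorem ae_restrict_Ioc_of_forall_shift {x : ℝ → ℝ} (hx : Measurable x) (hy : Measurable y)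
    (hτ : 0 ≤ τ)
    (h : ∀ᵐ s ∂volume.restrict (Ioc a (a + τ)), ∀ k < m, x (s + k * τ) = y (s + k * τ)) :
    ∀ᵐ t ∂volume.restrict (Ioc a (a + m * τ)), x t = y t := by
  have hzero : ∫⁻ t in Ioc a (a + m * τ), edist (x t) (y t) = 0 := by
    rw [setLIntegral_Ioc_eq_sum_shift _ a hτ]
    refine sum_eq_zero fun k hk => ?_
    rw [← lintegral_zero]
    refine lintegral_congr_ae ?_
    filter_upwards [h] with s hs
    rw [hs k (Finset.mem_range.1 hk), edist_self]
  filter_upwards [(lintegral_eq_zero_iff (hx.edist hy)).1 hzero] with t ht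
  exact edist_eq_zero.1 ht

end PersistenceCost

section Raccordation

variable {τ a b : ℝ} {n : ℕ} {xa xb xstar : ℝ → ℝ}

theorem measurable_of_raccordation (hxa : Measurable xa) (hxb : Measurable xb)
    (hxstar_a : ∀ t, t ≤ a → xstar t = xa t)
    (hxstar_mid : ∀ t, a < t → t < b →
      xstar t = xa t + (1 + (⌊(t - a) / τ⌋ : ℝ)) * (xb t - xa t) / (n + 1))
    (hxstar_b : ∀ t, b ≤ t → xstar t = xb t) :
    Measurable xstar := by
  set mid : ℝ → ℝ := fun t => xa t + (1 + (⌊(t - a) / τ⌋ : ℝ)) * (xb t - xa t) / (n + 1)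
  have hmid : Measurable mid :=
    hxa.add (((measurable_const.add (measurable_from_top.comp
      (Int.measurable_floor.comp (by fun_prop : Measurable fun t : ℝ => (t - a) / τ)))).mul
      (hxb.sub hxa)).div_const _)
  have hpiece : xstar = fun t => if t ≤ a then xa t else if b ≤ t then xb t else mid t := by
    funext t
    by_cases h₁ : t ≤ a
    · simp [h₁, hxstar_a t h₁]
    by_cases h₂ : b ≤ t
    · simp [h₁, h₂, hxstar_b t h₂]
    simp only [h₁, h₂, if_false]
    exact hxstar_mid t (not_le.1 h₁) (not_le.1 h₂)
  rw [hpiece]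
  exact hxa.ite measurableSet_Iic (hxb.ite measurableSet_Ici hmid)

theorem raccordation_apply_add_mul (hτ : 0 < τ) (hb : b = a + n * τ)
    (hxa_per : Function.Periodic xa τ) (hxb_per : Function.Periodic xb τ)
    (hxstar_mid : ∀ t, a < t → t < b →
      xstar t = xa t + (1 + (⌊(t - a) / τ⌋ : ℝ)) * (xb t - xa t) / (n + 1))
    (hxstar_b : ∀ t, b ≤ t → xstar t = xb t) {s : ℝ} (hs : s ∈ Ioo a (a + τ)) {k : ℕ}
    (hk : k ≤ n) :
    xstar (s + k * τ) = xa s + (k + 1) * (xb s - xa s) / (n + 1) := by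
  obtain ⟨hs₁, hs₂⟩ := hs
  rcases hk.lt_or_eq with hk | rfl
  · have hk' : (k : ℝ) + 1 ≤ n := by exact_mod_cast hk
    have hfloor : ⌊(s + k * τ - a) / τ⌋ = k := by
      rw [Int.floor_eq_iff, le_div_iff₀ hτ, div_lt_iff₀ hτ]
      push_cast
      constructor <;> nlinarith
    rw [hxstar_mid _ (by nlinarith) (by rw [hb]; nlinarith), hfloor, hxa_per.nat_mul k s,
      hxb_per.nat_mul k s]
    push_cast
    ring
  · rw [hxstar_b _ (by rw [hb]; linarith), hxb_per.nat_mul k s]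
    field_simp
    ring

theorem raccordation_sub_shift (hτ : 0 < τ) (hb : b = a + n * τ)
    (hxa_per : Function.Periodic xa τ) (hxb_per : Function.Periodic xb τ)
    (hxstar_a : ∀ t, t ≤ a → xstar t = xa t)
    (hxstar_mid : ∀ t, a < t → t < b →
      xstar t = xa t + (1 + (⌊(t - a) / τ⌋ : ℝ)) * (xb t - xa t) / (n + 1))
    (hxstar_b : ∀ t, b ≤ t → xstar t = xb t) {s : ℝ} (hs : s ∈ Ioo a (a + τ)) {k : ℕ}
    (hk : k ≤ n) :
    xstar (s + k * τ) - xstar (s + k * τ - τ) = (xb s - xa s) / (n + 1) := by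
  have hvalue := fun j (hj : j ≤ n) =>
    raccordation_apply_add_mul hτ hb hxa_per hxb_per hxstar_mid hxstar_b hs hj
  rcases k with _ | k
  · rw [hvalue 0 hk, Nat.cast_zero, zero_mul, add_zero, hxstar_a _ (by linarith [hs.2]),
      ← hxa_per (s - τ), sub_add_cancel]
    ring
  · have hprev : s + ((k + 1 : ℕ) : ℝ) * τ - τ = s + k * τ := by push_cast; ring
    rw [hprev, hvalue _ hk, hvalue k (by omega)]
    push_cast
    ring

theorem candidate_shift_sub_eq (hb : b = a + n * τ) (hxa_per : Function.Periodic xa τ)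
    (hxb_per : Function.Periodic xb τ) {y : ℝ → ℝ} (hy_a : ∀ t, t ≤ a → y t = xa t)
    (hy_b : ∀ t, b ≤ t → y t = xb t) {s : ℝ} (hs : s ∈ Ioc a (a + τ)) :
    y (s + (n + 1 : ℕ) * τ - τ) - y (s - τ) = (n + 1 : ℕ) * ((xb s - xa s) / (n + 1)) := by
  have hlast : s + ((n + 1 : ℕ) : ℝ) * τ - τ = s + n * τ := by push_cast; ring
  rw [hlast, hy_b _ (by rw [hb]; linarith [hs.1]), hy_a _ (by linarith [hs.2]),
    hxb_per.nat_mul n s, ← hxa_per (s - τ), sub_add_cancel]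
  push_cast
  field_simp

end Raccordation

theorem gluskabi_raccordation_unique_general
    (τ a b : ℝ) (hτ : 0 < τ) (n : ℕ) (hb : b = a + n * τ)
    (xa xb : ℝ → ℝ) (hxa : Continuous xa) (hxb : Continuous xb)
    (hxa_per : ∀ t, xa (t + τ) = xa t) (hxb_per : ∀ t, xb (t + τ) = xb t)
    (xstar : ℝ → ℝ)
    (hxstar_a : ∀ t, t ≤ a → xstar t = xa t)
    (hxstar_mid : ∀ t, a < t → t < b →
      xstar t = xa t + (1 + (⌊(t - a) / τ⌋ : ℝ)) * (xb t - xa t) / (n + 1))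
    (hxstar_b : ∀ t, b ≤ t → xstar t = xb t)
    (x : ℝ → ℝ) (hx : Measurable x)
    (hx_a : ∀ t, t ≤ a → x t = xa t) (hx_b : ∀ t, b ≤ t → x t = xb t)
    (hcost : (∫⁻ t in Set.Ioc a (b + τ), ENNReal.ofReal ((x t - x (t - τ)) ^ 2)) =
      ∫⁻ t in Set.Ioc a (b + τ), ENNReal.ofReal ((xstar t - xstar (t - τ)) ^ 2)) :
    ∀ᵐ t : ℝ, x t = xstar t := by
  have hΔ : Continuous fun s => (xb s - xa s) / (n + 1) := by fun_prop
  have hxstar := measurable_of_raccordation hxa.measurable hxb.measurable hxstar_a hxstar_mid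
    hxstar_b
  have hend : b + τ = a + ((n + 1 : ℕ) : ℝ) * τ := by rw [hb]; push_cast; ring
  have hmin := fun {y} (hy : Measurable y) hy_a hy_b =>
    lintegral_sq_sub_shift_eq_iff hy hΔ.measurable hτ.le
      (fun s hs => candidate_shift_sub_eq hb hxa_per hxb_per hy_a hy_b hs)
      ((hΔ.pow 2).integrableOn_Ioc.lintegral_lt_top.ne)
  have hstar_inc : ∀ᵐ s ∂volume.restrict (Ioc a (a + τ)), ∀ k < n + 1,
      xstar (s + k * τ) - xstar (s + k * τ - τ) = (xb s - xa s) / (n + 1) := by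
    -- `xstar` jumps at the grid points `a + kτ`, so the identity fails at `s = a + τ`.
    rw [← Measure.restrict_congr_set Ioo_ae_eq_Ioc]
    filter_upwards [ae_restrict_mem measurableSet_Ioo] with s hs k hk
    exact raccordation_sub_shift hτ hb hxa_per hxb_per hxstar_a hxstar_mid hxstar_b hs
      (Nat.lt_succ_iff.1 hk)
  have hx_inc := (hmin hx hx_a hx_b).1 <| by
    rw [← hend, hcost, hend, (hmin hxstar hxstar_a hxstar_b).2 hstar_inc]
  have hvalues : ∀ᵐ s ∂volume.restrict (Ioc a (a + τ)), ∀ k < n + 1,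
      x (s + k * τ) = xstar (s + k * τ) := by
    filter_upwards [hx_inc, hstar_inc, ae_restrict_mem measurableSet_Ioc] with s hxs hss hs k hk
    refine eq_of_sub_shift_eq ?_ (fun j hj => (hxs j hj).trans (hss j hj).symm) hk
    rw [hx_a _ (by linarith [hs.2]), hxstar_a _ (by linarith [hs.2])]
  have hperiods := ae_restrict_Ioc_of_forall_shift hx hxstar hτ.le hvalues
  rw [← hend, ae_restrict_iff' measurableSet_Ioc] at hperiods
  filter_upwards [hperiods] with t ht
  by_cases h₁ : t ≤ a
  · rw [hx_a t h₁, hxstar_a t h₁]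
  by_cases h₂ : b ≤ t
  · rw [hx_b t h₂, hxstar_b t h₂]
  exact ht ⟨not_le.1 h₁, by linarith [not_le.1 h₂]⟩

/-- Uniqueness of the Gluskabi raccordation of Theorem 1 up to null sets: any candidate
trajectory achieving the minimal persistence cost `J(x*)` agrees with `x*` almost
everywhere. -/
theorem gluskabi_raccordation_unique
    (τ a b : ℝ) (hτ : 0 < τ) (n : ℕ) (hn : 1 ≤ n) (hb : b = a + n * τ)
    (xa xb : ℝ → ℝ) (hxa : Continuous xa) (hxb : Continuous xb)
    (hxa_per : ∀ t, xa (t + τ) = xa t) (hxb_per : ∀ t, xb (t + τ) = xb t)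
    (xstar : ℝ → ℝ)
    (hxstar_a : ∀ t, t ≤ a → xstar t = xa t)
    (hxstar_mid : ∀ t, a < t → t < b →
      xstar t = xa t + (1 + (⌊(t - a) / τ⌋ : ℝ)) * (xb t - xa t) / (n + 1))
    (hxstar_b : ∀ t, b ≤ t → xstar t = xb t)
    (x : ℝ → ℝ) (hx : Measurable x)
    (hx_a : ∀ t, t ≤ a → x t = xa t) (hx_b : ∀ t, b ≤ t → x t = xb t)
    (hcost : (∫⁻ t in Set.Ioc a (b + τ), ENNReal.ofReal ((x t - x (t - τ)) ^ 2)) =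
      ∫⁻ t in Set.Ioc a (b + τ), ENNReal.ofReal ((xstar t - xstar (t - τ)) ^ 2)) :
    ∀ᵐ t : ℝ, x t = xstar t :=
  gluskabi_raccordation_unique_general τ a b hτ n hb xa xb hxa hxb hxa_per hxb_per xstar hxstar_a
    hxstar_mid hxstar_b x hx hx_a hx_b hcost
end

section
/- If a candidate trajectory x minimizes the persistence cost, i.e., J(x) ≤ J(y) for every candidate trajectory y, then for almost every t ∈ (a, b) one has x(t+τ) − x(t) = x(t) − x(t−τ). (The Euler–Lagrange/periodicity necessary condition λ(t) = λ(t+τ) for the optimal control u in Theorem 1.) -/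
/-!
Perturbing the minimizer by `c • 1_A` with `A ⊆ (a, b)` measurable changes the lag difference
`g t = x t - x (t - τ)` by `c (1_A t - 1_A (t - τ))`, so the cost is a quadratic polynomial in
`c` minimized at `c = 0` and its linear coefficient `∫ g (1_A - 1_A (· - τ))` vanishes.
Translating the second term by `τ` turns this into `∫_A (g (t + τ) - g t) = 0` for every such
`A`, hence `g (t + τ) = g t` for a.e. `t ∈ (a, b)`. The expansion needs `g ∈ L²`, i.e. a finite
cost, which holds because `x` costs no more than the candidate equal to `xa` up to `a` and to
`xb` afterwards, a function bounded on the cost window.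
-/

open MeasureTheory Set
open scoped ENNReal

section Variation

variable {α : Type*} [MeasurableSpace α] {μ : Measure α}

theorem integral_add_mul_sq {g φ : α → ℝ} (hg : MemLp g 2 μ) (hφ : MemLp φ 2 μ) (c : ℝ) :
    ∫ t, (g t + c * φ t) ^ 2 ∂μ =
      ∫ t, g t ^ 2 ∂μ + 2 * c * ∫ t, g t * φ t ∂μ + c ^ 2 * ∫ t, φ t ^ 2 ∂μ := by
  have hgφ : Integrable (fun t => 2 * c * (g t * φ t)) μ := (hg.integrable_mul hφ).const_mul _
  have hφφ : Integrable (fun t => c ^ 2 * φ t ^ 2) μ := hφ.integrable_sq.const_mul _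
  calc ∫ t, (g t + c * φ t) ^ 2 ∂μ
      = ∫ t, (g t ^ 2 + 2 * c * (g t * φ t) + c ^ 2 * φ t ^ 2) ∂μ :=
        integral_congr_ae (ae_of_all _ fun t => by ring)
    _ = _ := by
        have hsum : Integrable (fun t => g t ^ 2 + 2 * c * (g t * φ t)) μ :=
          hg.integrable_sq.add hgφ
        rw [integral_add hsum hφφ, integral_add hg.integrable_sq hgφ,
          integral_const_mul, integral_const_mul]

theorem integral_mul_eq_zero_of_forall_integral_sq_le {g φ : α → ℝ} (hg : MemLp g 2 μ)
    (hφ : MemLp φ 2 μ) (hmin : ∀ c : ℝ, ∫ t, g t ^ 2 ∂μ ≤ ∫ t, (g t + c * φ t) ^ 2 ∂μ) :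
    ∫ t, g t * φ t ∂μ = 0 := by
  have hdisc := discrim_le_zero (a := ∫ t, φ t ^ 2 ∂μ) (b := 2 * ∫ t, g t * φ t ∂μ) (c := 0)
    fun c => by nlinarith [hmin c, integral_add_mul_sq hg hφ c]
  rw [discrim] at hdisc
  nlinarith

theorem memLp_two_iff_lintegral_ofReal_sq_lt_top {f : α → ℝ} (hf : AEStronglyMeasurable f μ) :
    MemLp f 2 μ ↔ ∫⁻ t, ENNReal.ofReal (f t ^ 2) ∂μ < ∞ := by
  rw [memLp_two_iff_integrable_sq hf, Integrable,
    hasFiniteIntegral_iff_ofReal (ae_of_all _ fun _ => sq_nonneg _)]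
  exact and_iff_right (hf.pow 2)

theorem MeasureTheory.MemLp.lintegral_ofReal_sq {f : α → ℝ} (hf : MemLp f 2 μ) :
    ∫⁻ t, ENNReal.ofReal (f t ^ 2) ∂μ = ENNReal.ofReal (∫ t, f t ^ 2 ∂μ) :=
  (ofReal_integral_eq_lintegral_ofReal hf.integrable_sq (ae_of_all _ fun _ => sq_nonneg _)).symm

end Variation

theorem memLp_restrict_of_abs_le_of_continuous {X : Type*} [TopologicalSpace X] [MeasurableSpace X]
    {μ : Measure X} {s K : Set X} [IsFiniteMeasure (μ.restrict s)] (hs : MeasurableSet s)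
    (hK : IsCompact K) (hsK : s ⊆ K)
    {f F : X → ℝ} (hf : AEStronglyMeasurable f (μ.restrict s)) (hF : Continuous F)
    (hfF : ∀ t, |f t| ≤ F t) (p : ℝ≥0∞) : MemLp f p (μ.restrict s) := by
  obtain ⟨C, hC⟩ := hK.exists_bound_of_continuousOn hF.continuousOn
  refine MemLp.of_bound hf C (ae_restrict_of_forall_mem hs fun t ht => ?_)
  calc ‖f t‖ = |f t| := Real.norm_eq_abs _
    _ ≤ F t := hfF t
    _ ≤ ‖F t‖ := Real.le_norm_self _
    _ ≤ C := hC t (hsK ht)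

section AddGroup

variable {G : Type*} [AddGroup G] [MeasurableSpace G] [MeasurableAdd G] {μ : Measure G}
  [μ.IsAddRightInvariant]

theorem MeasureTheory.IntegrableOn.comp_add_right_of_mapsTo {g : G → ℝ} {I A : Set G} {τ : G}
    (hg : IntegrableOn g I μ) (hAI : MapsTo (· + τ) A I) :
    IntegrableOn (fun t => g (t + τ)) A μ :=
  (((measurePreserving_add_right μ τ).integrableOn_comp_preimage
    (measurableEmbedding_addRight τ)).2 hg).mono_set hAI

theorem setIntegral_mul_indicator_sub_comp_sub {g : G → ℝ} {I A : Set G} {τ : G}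
    (hA : MeasurableSet A) (hAI : A ⊆ I) (hAτI : MapsTo (· + τ) A I) (hg : IntegrableOn g I μ) :
    ∫ t in I, g t * (A.indicator 1 t - A.indicator 1 (t - τ)) ∂μ =
      ∫ t in A, (g t - g (t + τ)) ∂μ := by
  set B := (fun t => t - τ) ⁻¹' A
  have hB : MeasurableSet B := hA.preimage (measurable_sub_const' τ)
  have hBI : B ⊆ I := fun t ht => by simpa using hAτI ht
  have hBA : (fun t => t + τ) ⁻¹' B = A := by ext t; simp [B]
  have hpres := measurePreserving_add_right μ τ
  have hemb := measurableEmbedding_addRight (G := G) τ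
  have hintegrand : ∀ t, g t * (A.indicator 1 t - A.indicator 1 (t - τ)) =
      A.indicator g t - B.indicator g t := by
    intro t
    have hmem : t ∈ B ↔ t - τ ∈ A := Iff.rfl
    by_cases h₁ : t ∈ A <;> by_cases h₂ : t - τ ∈ A <;> simp [h₁, h₂, hmem]
  have hshift : ∫ t in B, g t ∂μ = ∫ t in A, g (t + τ) ∂μ := by
    rw [← hpres.setIntegral_preimage_emb hemb, hBA]
  simp only [hintegrand]
  rw [integral_sub (hg.indicator hA) (hg.indicator hB), setIntegral_indicator hA,
    setIntegral_indicator hB, inter_eq_right.2 hAI, inter_eq_right.2 hBI, hshift,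
    integral_sub (hg.mono_set hAI) (hg.comp_add_right_of_mapsTo hAτI)]

/-- The cost `J` of the paper is `persistenceCost (volume.restrict (Ioc a (b + τ))) τ`. -/
noncomputable def persistenceCost (μ : Measure G) (τ : G) (x : G → ℝ) : ℝ≥0∞ :=
  ∫⁻ t, ENNReal.ofReal ((x t - x (t - τ)) ^ 2) ∂μ

theorem setIntegral_secondDiff_eq_zero_of_persistenceCost_le {I A : Set G} {τ : G}
    [IsFiniteMeasure (μ.restrict I)] (hA : MeasurableSet A) (hAI : A ⊆ I)
    (hAτI : MapsTo (· + τ) A I) {x : G → ℝ}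
    (hx : MemLp (fun t => x t - x (t - τ)) 2 (μ.restrict I))
    (hmin : ∀ c : ℝ, persistenceCost (μ.restrict I) τ x ≤
      persistenceCost (μ.restrict I) τ (fun t => x t + c * A.indicator 1 t)) :
    ∫ t in A, ((x (t + τ) - x t) - (x t - x (t - τ))) ∂μ = 0 := by
  have hΔ : MemLp (fun t => A.indicator (1 : G → ℝ) t - A.indicator 1 (t - τ)) 2
      (μ.restrict I) :=
    have hw := memLp_indicator_const (μ := μ.restrict I) 2 hA (1 : ℝ) (Or.inr (measure_ne_top _ _))
    have hwτ := memLp_indicator_const (μ := μ.restrict I) 2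
      (hA.preimage (measurable_sub_const' τ)) (1 : ℝ) (Or.inr (measure_ne_top _ _))
    hw.sub hwτ
  have hfirst := integral_mul_eq_zero_of_forall_integral_sq_le hx hΔ fun c => by
    have hc := hmin c
    have hperturbed : persistenceCost (μ.restrict I) τ (fun t => x t + c * A.indicator 1 t) =
        ∫⁻ t, ENNReal.ofReal (((x t - x (t - τ)) +
          c * (A.indicator 1 t - A.indicator 1 (t - τ))) ^ 2) ∂(μ.restrict I) :=
      lintegral_congr fun t => by ring_nf
    have hx' : MemLp (fun t => (x t - x (t - τ)) +
        c * (A.indicator 1 t - A.indicator 1 (t - τ))) 2 (μ.restrict I) :=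
      hx.add (hΔ.const_mul c)
    rw [hperturbed, persistenceCost, hx.lintegral_ofReal_sq, hx'.lintegral_ofReal_sq] at hc
    exact (ENNReal.ofReal_le_ofReal_iff (integral_nonneg fun _ => sq_nonneg _)).1 hc
  rw [setIntegral_mul_indicator_sub_comp_sub hA hAI hAτI (hx.integrable one_le_two)] at hfirst
  rw [← neg_eq_zero, ← integral_neg, ← hfirst]
  simp only [add_sub_cancel_right, neg_sub]

theorem ae_secondDiff_eq_zero_of_persistenceCost_le {I S : Set G} {τ : G}
    [IsFiniteMeasure (μ.restrict I)] (hS : MeasurableSet S) (hSI : S ⊆ I)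
    (hSτI : MapsTo (· + τ) S I) {x : G → ℝ}
    (hx : MemLp (fun t => x t - x (t - τ)) 2 (μ.restrict I))
    (hmin : ∀ A, MeasurableSet A → A ⊆ S → ∀ c : ℝ, persistenceCost (μ.restrict I) τ x ≤
      persistenceCost (μ.restrict I) τ (fun t => x t + c * A.indicator 1 t)) :
    ∀ᵐ t ∂(μ.restrict S), x (t + τ) - x t = x t - x (t - τ) := by
  have hg : IntegrableOn (fun t => x t - x (t - τ)) I μ := hx.integrable one_le_two
  have hint : IntegrableOn (fun t => (x (t + τ) - x t) - (x t - x (t - τ))) S μ := by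
    simpa only [add_sub_cancel_right, Pi.sub_def] using
      (hg.comp_add_right_of_mapsTo hSτI).sub (hg.mono_set hSI)
  have hzero := hint.ae_eq_zero_of_forall_setIntegral_eq_zero fun A hA _ => by
    rw [Measure.restrict_restrict hA]
    exact setIntegral_secondDiff_eq_zero_of_persistenceCost_le (hA.inter hS)
      (inter_subset_right.trans hSI) (hSτI.mono_left inter_subset_right) hx
      (hmin _ (hA.inter hS) inter_subset_right)
  filter_upwards [hzero] with t ht
  exact sub_eq_zero.1 ht

end AddGroup

theorem persistenceCost_restrict_Ioc_ite_lt_top {xa xb : ℝ → ℝ} (hxa : Continuous xa)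
    (hxb : Continuous xb) (a τ u v : ℝ) :
    persistenceCost (volume.restrict (Ioc u v)) τ (fun t => if t ≤ a then xa t else xb t) < ∞ := by
  set y : ℝ → ℝ := fun t => if t ≤ a then xa t else xb t
  set F : ℝ → ℝ := fun t => |xa t| + |xb t|
  have hyF : ∀ t, |y t| ≤ F t := fun t => by
    simp only [y, F]; split_ifs <;> linarith [abs_nonneg (xa t), abs_nonneg (xb t)]
  have hy : Measurable y := Measurable.ite measurableSet_Iic hxa.measurable hxb.measurable
  have hlag : MemLp (fun t => y t - y (t - τ)) 2 (volume.restrict (Ioc u v)) :=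
    memLp_restrict_of_abs_le_of_continuous measurableSet_Ioc isCompact_Icc Ioc_subset_Icc_self
      (hy.sub (hy.comp (measurable_sub_const τ))).aestronglyMeasurable
      (F := fun t => F t + F (t - τ)) (by fun_prop)
      (fun t => (abs_sub _ _).trans (add_le_add (hyF t) (hyF (t - τ)))) 2
  exact (memLp_two_iff_lintegral_ofReal_sq_lt_top hlag.1).1 hlag

theorem gluskabi_euler_lagrange_general
    (τ a b : ℝ) (hτ : 0 < τ)
    (xa xb : ℝ → ℝ) (hxa : Continuous xa) (hxb : Continuous xb)
    (x : ℝ → ℝ) (hx : Measurable x)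
    (hx_a : ∀ t, t ≤ a → x t = xa t) (hx_b : ∀ t, b ≤ t → x t = xb t)
    (hmin : ∀ y : ℝ → ℝ, Measurable y → (∀ t, t ≤ a → y t = xa t) →
      (∀ t, b ≤ t → y t = xb t) →
      (∫⁻ t in Set.Ioc a (b + τ), ENNReal.ofReal ((x t - x (t - τ)) ^ 2)) ≤
        ∫⁻ t in Set.Ioc a (b + τ), ENNReal.ofReal ((y t - y (t - τ)) ^ 2)) :
    ∀ᵐ t ∂(volume.restrict (Set.Ioo a b)), x (t + τ) - x t = x t - x (t - τ) := by
  set I := Ioc a (b + τ)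
  have hSI : Ioo a b ⊆ I := fun t ht => ⟨ht.1, by linarith [ht.2]⟩
  have hSτI : MapsTo (· + τ) (Ioo a b) I := fun t ht => ⟨by linarith [ht.1], by linarith [ht.2]⟩
  have hcost : MemLp (fun t => x t - x (t - τ)) 2 (volume.restrict I) := by
    set y₀ : ℝ → ℝ := fun t => if t ≤ a then xa t else xb t
    have hy₀b : ∀ t, b ≤ t → y₀ t = xb t := fun t ht => by
      -- on `[b, a]` the two boundary conditions on `x` force `xa = xb`
      by_cases h : t ≤ a
      · simp only [y₀, if_pos h, ← hx_a t h, hx_b t ht]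
      · exact if_neg h
    refine (memLp_two_iff_lintegral_ofReal_sq_lt_top
      (hx.sub (hx.comp (measurable_sub_const τ))).aestronglyMeasurable).2 ?_
    exact (hmin y₀ (Measurable.ite measurableSet_Iic hxa.measurable hxb.measurable)
      (fun t ht => if_pos ht) hy₀b).trans_lt
      (persistenceCost_restrict_Ioc_ite_lt_top hxa hxb a τ a (b + τ))
  refine ae_secondDiff_eq_zero_of_persistenceCost_le measurableSet_Ioo hSI hSτI hcost
    fun A hA hAS c => hmin _ ?_ ?_ ?_
  · exact hx.add (measurable_const.mul (measurable_one.indicator hA))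
  · intro t ht
    simp [indicator_of_notMem (fun h => (hAS h).1.not_ge ht), hx_a t ht]
  · intro t ht
    simp [indicator_of_notMem (fun h => (hAS h).2.not_ge ht), hx_b t ht]

/-- The Euler–Lagrange/periodicity necessary condition of Theorem 1: if a candidate
trajectory `x` minimizes the persistence cost among all candidate trajectories, then
for almost every `t ∈ (a, b)` one has `x(t+τ) - x(t) = x(t) - x(t-τ)`. -/
theorem gluskabi_euler_lagrange
    (τ a b : ℝ) (hτ : 0 < τ) (n : ℕ) (hn : 1 ≤ n) (hb : b = a + n * τ)
    (xa xb : ℝ → ℝ) (hxa : Continuous xa) (hxb : Continuous xb)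
    (hxa_per : ∀ t, xa (t + τ) = xa t) (hxb_per : ∀ t, xb (t + τ) = xb t)
    (x : ℝ → ℝ) (hx : Measurable x)
    (hx_a : ∀ t, t ≤ a → x t = xa t) (hx_b : ∀ t, b ≤ t → x t = xb t)
    (hmin : ∀ y : ℝ → ℝ, Measurable y → (∀ t, t ≤ a → y t = xa t) →
      (∀ t, b ≤ t → y t = xb t) →
      (∫⁻ t in Set.Ioc a (b + τ), ENNReal.ofReal ((x t - x (t - τ)) ^ 2)) ≤
        ∫⁻ t in Set.Ioc a (b + τ), ENNReal.ofReal ((y t - y (t - τ)) ^ 2)) :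
    ∀ᵐ t ∂(volume.restrict (Set.Ioo a b)), x (t + τ) - x t = x t - x (t - τ) :=
  gluskabi_euler_lagrange_general τ a b hτ xa xb hxa hxb x hx hx_a hx_b hmin
end

section
/- The minimal persistence cost of Theorem 2 equals J(x*) = (1/(n+2)) · ∫_a^{b−nτ} (x^b(θ) − x^a(θ))² dθ + (1/(n+1)) · ∫_{b−nτ}^{a+τ} (x^b(θ) − x^a(θ))² dθ. -/
/-!
Extend the formula for `x*` on `(a, b)` to the whole line: `X t = x^a t + (1 + ⌊(t - a)/τ⌋) u₀ t`.
Since `u₀` is `τ`-periodic, `X t - X (t - τ) = u₀ t` everywhere, and the choice of the two weights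
`1/(n+2)`, `1/(n+1)` makes `X = x^a` on `[a - τ, a)` and `X = x^b` on `[b, b + τ)`. Hence
`x* t - x* (t - τ) = u₀ t` for almost every `t ∈ (a, b + τ]`, an interval of length
`(n + 1) τ + r` with `r = b - a - nτ`. By periodicity the cost is `n + 2` times the integral of
`u₀²` over `(a, a + r]` plus `n + 1` times that over `(a + r, a + τ]`, where `u₀` is
`(x^b - x^a)/(n+2)` and `(x^b - x^a)/(n+1)` respectively.
-/

open MeasureTheory Set Function
open scoped ENNReal

section LIntegralIoc

variable {μ : Measure ℝ} {f : ℝ → ℝ≥0∞}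

theorem setLIntegral_Ioc_add_adjacent {p q r : ℝ} (hpq : p ≤ q) (hqr : q ≤ r) :
    (∫⁻ t in Ioc p q, f t ∂μ) + ∫⁻ t in Ioc q r, f t ∂μ = ∫⁻ t in Ioc p r, f t ∂μ := by
  rw [← Ioc_union_Ioc_eq_Ioc hpq hqr,
    lintegral_union measurableSet_Ioc (Ioc_disjoint_Ioc_of_le le_rfl)]

theorem ofReal_mul_setLIntegral_Ioc_sq_div [NullSingletonClass μ] {u v : ℝ → ℝ} {c p q : ℝ}
    (hc : 0 < c) (huv : ∀ t ∈ Ioo p q, u t = v t / c) :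
    ENNReal.ofReal c * ∫⁻ t in Ioc p q, ENNReal.ofReal (u t ^ 2) ∂μ =
      ENNReal.ofReal (1 / c) * ∫⁻ t in Ioc p q, ENNReal.ofReal (v t ^ 2) ∂μ := by
  rw [← setLIntegral_congr Ioo_ae_eq_Ioc, ← setLIntegral_congr Ioo_ae_eq_Ioc,
    ← lintegral_const_mul' _ _ ENNReal.ofReal_ne_top,
    ← lintegral_const_mul' _ _ ENNReal.ofReal_ne_top]
  refine setLIntegral_congr_fun measurableSet_Ioo fun t ht => ?_
  rw [huv t ht, ← ENNReal.ofReal_mul hc.le, ← ENNReal.ofReal_mul (by positivity)]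
  congr 1
  field_simp

variable [μ.IsAddRightInvariant] {τ : ℝ}

theorem Function.Periodic.setLIntegral_Ioc_add_period (hf : Periodic f τ) (p q : ℝ) :
    ∫⁻ t in Ioc (p + τ) (q + τ), f t ∂μ = ∫⁻ t in Ioc p q, f t ∂μ := by
  rw [← image_add_const_Ioc, ← (measurePreserving_add_right μ τ).setLIntegral_comp_emb
    (MeasurableEquiv.addRight τ).measurableEmbedding]
  exact lintegral_congr hf

theorem Function.Periodic.setLIntegral_Ioc_add_nat_mul_add (hf : Periodic f τ) (hτ : 0 ≤ τ)
    {r : ℝ} (hr : 0 ≤ r) (m : ℕ) (p : ℝ) :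
    ∫⁻ t in Ioc p (p + m * τ + r), f t ∂μ =
      m * ∫⁻ t in Ioc p (p + τ), f t ∂μ + ∫⁻ t in Ioc p (p + r), f t ∂μ := by
  induction m with
  | zero => simp
  | succ m ih =>
    have hm : 0 ≤ (m : ℝ) * τ := by positivity
    rw [← setLIntegral_Ioc_add_adjacent (q := p + τ) (by linarith) (by push_cast; nlinarith),
      show p + ((m + 1 : ℕ) : ℝ) * τ + r = p + m * τ + r + τ by push_cast; ring,
      hf.setLIntegral_Ioc_add_period, ih]
    push_cast
    ring

end LIntegralIoc

namespace Gluskabi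

variable (τ a b : ℝ) (n : ℤ) (xa xb : ℝ → ℝ)

/-- The function `u₀`: here `(t - a) - τ ⌊(t - a)/τ⌋` is `(t - a) mod τ`. -/
noncomputable def increment (t : ℝ) : ℝ :=
  if (t - a) - τ * (⌊(t - a) / τ⌋ : ℝ) < b - a - n * τ then (xb t - xa t) / ((n : ℝ) + 2)
  else (xb t - xa t) / ((n : ℝ) + 1)

noncomputable def extension (t : ℝ) : ℝ :=
  xa t + (1 + (⌊(t - a) / τ⌋ : ℝ)) * increment τ a b n xa xb t

variable {τ a b n xa xb}

theorem floor_div_mul_le_and_lt (hτ : 0 < τ) (x : ℝ) :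
    (⌊x / τ⌋ : ℝ) * τ ≤ x ∧ x < ((⌊x / τ⌋ : ℝ) + 1) * τ :=
  ⟨(le_div_iff₀ hτ).1 (Int.floor_le _), (div_lt_iff₀ hτ).1 (Int.lt_floor_add_one _)⟩

theorem floor_add_period (hτ : τ ≠ 0) (t : ℝ) : ⌊(t + τ - a) / τ⌋ = ⌊(t - a) / τ⌋ + 1 := by
  rw [show (t + τ - a) / τ = (t - a) / τ + 1 by field_simp; ring, Int.floor_add_one]

theorem increment_periodic (hτ : τ ≠ 0) (hxa : Periodic xa τ) (hxb : Periodic xb τ) :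
    Periodic (increment τ a b n xa xb) τ := fun t => by
  simp only [increment, floor_add_period hτ, hxa t, hxb t]
  push_cast
  ring_nf

theorem extension_sub_period (hτ : τ ≠ 0) (hxa : Periodic xa τ) (hxb : Periodic xb τ) (t : ℝ) :
    extension τ a b n xa xb t - extension τ a b n xa xb (t - τ) = increment τ a b n xa xb t := by
  have hfloor := floor_add_period (a := a) hτ (t - τ)
  rw [sub_add_cancel] at hfloor
  rw [extension, extension, hfloor, ← (increment_periodic hτ hxa hxb).sub_eq t, hxa.sub_eq t]
  push_cast
  ring

theorem extension_of_mem_Ico_left (hτ : 0 < τ) {t : ℝ} (ht : t ∈ Ico (a - τ) a) :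
    extension τ a b n xa xb t = xa t := by
  have hfloor : ⌊(t - a) / τ⌋ = -1 := by
    rw [Int.floor_eq_iff, le_div_iff₀ hτ, div_lt_iff₀ hτ]
    constructor <;> push_cast <;> linarith [ht.1, ht.2]
  rw [extension, hfloor]
  push_cast
  ring

theorem extension_of_mem_Ico_right (hτ : 0 < τ) (hab : a ≤ b) (hn : n = ⌊(b - a) / τ⌋) {t : ℝ}
    (ht : t ∈ Ico b (b + τ)) : extension τ a b n xa xb t = xb t := by
  have hn0 : (0 : ℝ) ≤ n := by
    rw [hn]; exact_mod_cast Int.floor_nonneg.2 (div_nonneg (sub_nonneg.2 hab) hτ.le)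
  obtain ⟨hnl, hnu⟩ := hn ▸ floor_div_mul_le_and_lt hτ (b - a)
  obtain ⟨htb, htb'⟩ := ht
  by_cases hlow : t - a < ((n : ℝ) + 1) * τ
  · have hfloor : ⌊(t - a) / τ⌋ = n := by
      rw [Int.floor_eq_iff, le_div_iff₀ hτ, div_lt_iff₀ hτ]
      constructor <;> linarith
    have hmod : ¬ (t - a) - τ * (n : ℝ) < b - a - n * τ := by linarith
    rw [extension, increment, hfloor, if_neg hmod]
    field_simp
    ring
  · have hfloor : ⌊(t - a) / τ⌋ = n + 1 := by
      rw [Int.floor_eq_iff, le_div_iff₀ hτ, div_lt_iff₀ hτ]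
      constructor <;> push_cast <;> linarith
    have hmod : (t - a) - τ * ((n : ℝ) + 1) < b - a - n * τ := by linarith
    rw [extension, increment, hfloor]
    push_cast
    rw [if_pos hmod]
    field_simp
    ring

theorem increment_of_mem_Ioo (hτ : 0 < τ) {t : ℝ} (ht : t ∈ Ioo a (a + τ)) :
    increment τ a b n xa xb t =
      if t < b - n * τ then (xb t - xa t) / ((n : ℝ) + 2) else (xb t - xa t) / ((n : ℝ) + 1) := by
  have hfloor : ⌊(t - a) / τ⌋ = 0 := by
    rw [Int.floor_eq_zero_iff]
    exact ⟨div_nonneg (by linarith [ht.1]) hτ.le, (div_lt_one hτ).2 (by linarith [ht.2])⟩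
  have hmod : t - a < b - a - n * τ ↔ t < b - n * τ := by constructor <;> intro <;> linarith
  simp only [increment, hfloor, Int.cast_zero, mul_zero, sub_zero, hmod]

theorem sub_period_ae_eq_increment (hτ : 0 < τ) (hab : a ≤ b) (hn : n = ⌊(b - a) / τ⌋)
    (hxa : Periodic xa τ) (hxb : Periodic xb τ) {x : ℝ → ℝ} (hx_a : ∀ t, t ≤ a → x t = xa t)
    (hx_mid : ∀ t, a < t → t < b → x t = extension τ a b n xa xb t)
    (hx_b : ∀ t, b ≤ t → x t = xb t) :
    ∀ᵐ t, t ∈ Ioc a (b + τ) → x t - x (t - τ) = increment τ a b n xa xb t := by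
  have hx : ∀ t ∈ Ioo (a - τ) (b + τ), t ≠ a → x t = extension τ a b n xa xb t := by
    rintro t ⟨ht₁, ht₂⟩ hta
    rcases hta.lt_or_gt with hlt | hgt
    · rw [hx_a t hlt.le, extension_of_mem_Ico_left hτ ⟨ht₁.le, hlt⟩]
    · rcases lt_or_ge t b with hltb | hgeb
      · exact hx_mid t hgt hltb
      · rw [hx_b t hgeb, extension_of_mem_Ico_right hτ hab hn ⟨hgeb, ht₂⟩]
  have hnull : ∀ᵐ t, t ∉ ({a + τ, b + τ} : Set ℝ) :=
    (toFinite _).countable.ae_notMem volume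
  filter_upwards [hnull] with t ht ⟨ht₁, ht₂⟩
  simp only [mem_insert_iff, mem_singleton_iff, not_or] at ht
  rw [hx t ⟨by linarith, lt_of_le_of_ne ht₂ ht.2⟩ (by linarith),
    hx (t - τ) ⟨by linarith, by linarith⟩ (fun h => ht.1 (by linarith)),
    extension_sub_period hτ.ne' hxa hxb]

end Gluskabi

open Gluskabi in
theorem gluskabi_raccordation_general_cost_general
    (τ a b : ℝ) (hτ : 0 < τ) (hab : a < b) (n : ℤ) (hn : n = ⌊(b - a) / τ⌋)
    (xa xb : ℝ → ℝ)
    (hxa_per : ∀ t, xa (t + τ) = xa t) (hxb_per : ∀ t, xb (t + τ) = xb t)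
    (u₀ : ℝ → ℝ)
    (hu₀ : ∀ t, u₀ t =
      if (t - a) - τ * (⌊(t - a) / τ⌋ : ℝ) < b - a - n * τ then
        (xb t - xa t) / ((n : ℝ) + 2)
      else (xb t - xa t) / ((n : ℝ) + 1))
    (xstar : ℝ → ℝ)
    (hxstar_a : ∀ t, t ≤ a → xstar t = xa t)
    (hxstar_mid : ∀ t, a < t → t < b →
      xstar t = xa t + (1 + (⌊(t - a) / τ⌋ : ℝ)) * u₀ t)
    (hxstar_b : ∀ t, b ≤ t → xstar t = xb t) :
    (∫⁻ t in Set.Ioc a (b + τ), ENNReal.ofReal ((xstar t - xstar (t - τ)) ^ 2)) =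
      (ENNReal.ofReal (1 / ((n : ℝ) + 2))) *
          (∫⁻ θ in Set.Ioc a (b - n * τ), ENNReal.ofReal ((xb θ - xa θ) ^ 2)) +
        (ENNReal.ofReal (1 / ((n : ℝ) + 1))) *
          ∫⁻ θ in Set.Ioc (b - n * τ) (a + τ), ENNReal.ofReal ((xb θ - xa θ) ^ 2) := by
  obtain rfl : u₀ = increment τ a b n xa xb := funext hu₀
  have hcost := sub_period_ae_eq_increment hτ hab.le hn hxa_per hxb_per hxstar_a hxstar_mid hxstar_b
  obtain ⟨hnl, hnu⟩ := hn ▸ floor_div_mul_le_and_lt hτ (b - a)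
  have hlo : ∀ t ∈ Ioo a (b - n * τ), increment τ a b n xa xb t = (xb t - xa t) / ((n : ℝ) + 2) :=
    fun t ht => by rw [increment_of_mem_Ioo hτ ⟨ht.1, by linarith [ht.2]⟩, if_pos ht.2]
  have hhi : ∀ t ∈ Ioo (b - n * τ) (a + τ),
      increment τ a b n xa xb t = (xb t - xa t) / ((n : ℝ) + 1) :=
    fun t ht => by rw [increment_of_mem_Ioo hτ ⟨by linarith [ht.1], ht.2⟩, if_neg ht.1.le.not_gt]
  have hper : Periodic (fun t => ENNReal.ofReal (increment τ a b n xa xb t ^ 2)) τ := fun t => by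
    simp only [increment_periodic hτ.ne' hxa_per hxb_per t]
  lift n to ℕ using hn ▸ Int.floor_nonneg.2 (div_nonneg (sub_nonneg.2 hab.le) hτ.le)
  push_cast at hnl hnu hlo hhi hper ⊢
  rw [setLIntegral_congr_fun_ae measurableSet_Ioc (hcost.mono fun t ht h => by rw [ht h]),
    show b + τ = a + ((n + 1 : ℕ) : ℝ) * τ + (b - n * τ - a) by push_cast; ring,
    hper.setLIntegral_Ioc_add_nat_mul_add hτ.le (by linarith) _ a,
    add_sub_cancel, ← setLIntegral_Ioc_add_adjacent (q := b - n * τ) (by linarith) (by linarith),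
    ← ofReal_mul_setLIntegral_Ioc_sq_div (by positivity) hlo,
    ← ofReal_mul_setLIntegral_Ioc_sq_div (by positivity) hhi,
    show ((n : ℝ) + 2) = ((n + 2 : ℕ) : ℝ) by push_cast; ring,
    show ((n : ℝ) + 1) = ((n + 1 : ℕ) : ℝ) by push_cast; ring,
    ENNReal.ofReal_natCast, ENNReal.ofReal_natCast]
  push_cast
  ring

/-- The minimal persistence cost of Theorem 2:
`J(x*) = (1/(n+2)) ∫_a^{b-nτ} (x^b θ - x^a θ)² dθ
       + (1/(n+1)) ∫_{b-nτ}^{a+τ} (x^b θ - x^a θ)² dθ`. -/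
theorem gluskabi_raccordation_general_cost
    (τ a b : ℝ) (hτ : 0 < τ) (hab : a < b) (n : ℤ) (hn : n = ⌊(b - a) / τ⌋)
    (xa xb : ℝ → ℝ) (hxa : Continuous xa) (hxb : Continuous xb)
    (hxa_per : ∀ t, xa (t + τ) = xa t) (hxb_per : ∀ t, xb (t + τ) = xb t)
    (u₀ : ℝ → ℝ)
    (hu₀ : ∀ t, u₀ t =
      if (t - a) - τ * (⌊(t - a) / τ⌋ : ℝ) < b - a - n * τ then
        (xb t - xa t) / ((n : ℝ) + 2)
      else (xb t - xa t) / ((n : ℝ) + 1))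
    (xstar : ℝ → ℝ)
    (hxstar_a : ∀ t, t ≤ a → xstar t = xa t)
    (hxstar_mid : ∀ t, a < t → t < b →
      xstar t = xa t + (1 + (⌊(t - a) / τ⌋ : ℝ)) * u₀ t)
    (hxstar_b : ∀ t, b ≤ t → xstar t = xb t) :
    (∫⁻ t in Set.Ioc a (b + τ), ENNReal.ofReal ((xstar t - xstar (t - τ)) ^ 2)) =
      (ENNReal.ofReal (1 / ((n : ℝ) + 2))) *
          (∫⁻ θ in Set.Ioc a (b - n * τ), ENNReal.ofReal ((xb θ - xa θ) ^ 2)) +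
        (ENNReal.ofReal (1 / ((n : ℝ) + 1))) *
          ∫⁻ θ in Set.Ioc (b - n * τ) (a + τ), ENNReal.ofReal ((xb θ - xa θ) ^ 2) :=
  gluskabi_raccordation_general_cost_general τ a b hτ hab n hn xa xb hxa_per hxb_per u₀ hu₀ xstar
    hxstar_a hxstar_mid hxstar_b
end

section
/- If a candidate trajectory x satisfies J(x) = J(x*), i.e., x achieves the minimal persistence cost of Theorem 2, then x(t) = x*(t) for almost every t ∈ ℝ. (Uniqueness of the Gluskabi raccordation of Theorem 2 up to null sets.) -/
/-!
Write `y = x - x*` (supported in `(a, b)`), `e(t) = y(t) - y(t - τ)` and `u₀` for the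
`τ`-periodic increment of `x*`, so that `x(t) - x(t - τ) = u₀(t) + e(t)` on `(a, b + τ]`.
Shifting by `τ` and using the periodicity of `u₀` gives `∫ u₀ e = ∫ u₀ y - ∫ u₀ y = 0`, hence
`J(x) = J(x*) + ‖e‖²`; equal costs force `e = 0` a.e., and telescoping `y(t) = ∑ₖ e(t - kτ)`
gives `y = 0` a.e.
-/

open MeasureTheory
open scoped ENNReal
open Function Set

section L2

variable {α : Type*} [MeasurableSpace α] {μ : Measure α} {f u : α → ℝ}

theorem memLp_two_of_lintegral_sq_eq (hf : AEStronglyMeasurable f μ) (hu : MemLp u 2 μ)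
    (h : ∫⁻ t, ENNReal.ofReal (f t ^ 2) ∂μ = ∫⁻ t, ENNReal.ofReal (u t ^ 2) ∂μ) :
    MemLp f 2 μ := by
  refine (memLp_two_iff_integrable_sq hf).2 ⟨hf.pow 2, ?_⟩
  rw [hasFiniteIntegral_iff_ofReal (ae_of_all _ fun t => sq_nonneg (f t)), h]
  exact hu.integrable_sq.lintegral_lt_top

theorem ae_eq_of_integral_sq_eq_of_integral_mul_sub_eq_zero (hf : MemLp f 2 μ) (hu : MemLp u 2 μ)
    (hsq : ∫ t, f t ^ 2 ∂μ = ∫ t, u t ^ 2 ∂μ) (hcross : ∫ t, u t * (f t - u t) ∂μ = 0) :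
    f =ᵐ[μ] u := by
  have hsq_int : Integrable (fun t => f t ^ 2 - u t ^ 2) μ := hf.integrable_sq.sub hu.integrable_sq
  have hcross_int : Integrable (fun t => u t * (f t - u t)) μ := hu.integrable_mul (hf.sub hu)
  have hdist : ∫ t, (f t - u t) ^ 2 ∂μ = 0 := by
    calc ∫ t, (f t - u t) ^ 2 ∂μ
        = ∫ t, (f t ^ 2 - u t ^ 2 - 2 * (u t * (f t - u t))) ∂μ :=
          integral_congr_ae (ae_of_all _ fun t => by ring)
      _ = 0 := by
          rw [integral_sub hsq_int (hcross_int.const_mul 2),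
            integral_sub hf.integrable_sq hu.integrable_sq, integral_const_mul, hsq, hcross]
          ring
  filter_upwards [(integral_eq_zero_iff_of_nonneg (fun t => sq_nonneg (f t - u t))
    (hf.sub hu).integrable_sq).1 hdist] with t ht
  exact sub_eq_zero.1 (pow_eq_zero_iff two_ne_zero |>.1 ht)

end L2

section Telescoping

variable {τ a b : ℝ} {y : ℝ → ℝ}

theorem exists_eq_indicator_sum_sub_shift (hτ : 0 < τ) (hya : ∀ t ≤ a, y t = 0)
    (hyb : ∀ t, b ≤ t → y t = 0) :
    ∃ N : ℕ, y = (Iic b).indicator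
      (fun t => ∑ k ∈ Finset.range N, (y (t - k * τ) - y (t - k * τ - τ))) := by
  obtain ⟨N, hN⟩ := exists_nat_gt ((b - a) / τ)
  refine ⟨N, funext fun t => ?_⟩
  by_cases htb : t ∈ Iic b
  · have hfar : t - N * τ ≤ a := by
      have := (div_lt_iff₀ hτ).1 hN
      linarith [mem_Iic.1 htb]
    have htel := Finset.sum_range_sub' (fun k : ℕ => y (t - k * τ)) N
    simp only [Nat.cast_add, Nat.cast_one, add_mul, one_mul, ← sub_sub] at htel
    rw [indicator_of_mem htb, htel, hya _ hfar, Nat.cast_zero, zero_mul, sub_zero, sub_zero]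
  · rw [indicator_of_notMem htb, hyb t (le_of_lt (not_le.1 htb))]

theorem integrable_of_integrable_sub_shift (hτ : 0 < τ) (hya : ∀ t ≤ a, y t = 0)
    (hyb : ∀ t, b ≤ t → y t = 0) (he : Integrable (fun t => y t - y (t - τ))) :
    Integrable y := by
  obtain ⟨N, hN⟩ := exists_eq_indicator_sum_sub_shift hτ hya hyb
  rw [hN]
  refine (integrable_finsetSum _ fun k _ => ?_).indicator measurableSet_Iic
  exact he.comp_sub_right _

theorem ae_eq_zero_of_sub_shift_ae_eq_zero (hτ : 0 < τ) (hya : ∀ t ≤ a, y t = 0)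
    (hyb : ∀ t, b ≤ t → y t = 0) (he : ∀ᵐ t, y t - y (t - τ) = 0) :
    ∀ᵐ t, y t = 0 := by
  obtain ⟨N, hN⟩ := exists_eq_indicator_sum_sub_shift hτ hya hyb
  have hshift : ∀ k : ℕ, ∀ᵐ t, y (t - k * τ) - y (t - k * τ - τ) = 0 := fun k =>
    (measurePreserving_sub_right volume (k * τ)).quasiMeasurePreserving.ae he
  filter_upwards [ae_all_iff.2 hshift] with t ht
  rw [hN, indicator_apply_eq_zero]
  exact fun _ => Finset.sum_eq_zero fun k _ => ht k

theorem sub_shift_eq_zero_of_notMem_Ioc (hτ : 0 < τ) (hya : ∀ t ≤ a, y t = 0)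
    (hyb : ∀ t, b ≤ t → y t = 0) {t : ℝ} (ht : t ∉ Ioc a (b + τ)) : y t - y (t - τ) = 0 := by
  rcases not_and_or.1 (mem_Ioc.not.1 ht) with ht | ht
  · rw [hya t (not_lt.1 ht), hya (t - τ) (by linarith [not_lt.1 ht]), sub_zero]
  · rw [hyb t (by linarith [not_le.1 ht]), hyb (t - τ) (by linarith [not_le.1 ht]), sub_zero]

end Telescoping

theorem integral_mul_sub_shift_eq_zero {τ C : ℝ} {u y : ℝ → ℝ} (hu_per : Periodic u τ)
    (hu : AEStronglyMeasurable u) (hu_bdd : ∀ t, ‖u t‖ ≤ C) (hy : Integrable y) :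
    ∫ t, u t * (y t - y (t - τ)) = 0 := by
  have hshift : ∫ t, u t * y (t - τ) = ∫ t, u t * y t := by
    simpa only [sub_add_cancel, hu_per _] using
      integral_sub_right_eq_self (μ := volume) (fun s => u (s + τ) * y s) τ
  simp_rw [mul_sub]
  rw [integral_sub (hy.bdd_mul hu (ae_of_all _ hu_bdd))
    ((hy.comp_sub_right τ).bdd_mul hu (ae_of_all _ hu_bdd)), hshift, sub_self]

theorem ae_eq_of_setLIntegral_sq_sub_shift_eq {τ a b C : ℝ} {u x z : ℝ → ℝ} (hτ : 0 < τ)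
    (hu_per : Periodic u τ) (hu : Measurable u) (hu_bdd : ∀ t, ‖u t‖ ≤ C) (hx : Measurable x)
    (hxz_a : ∀ t ≤ a, x t = z t) (hxz_b : ∀ t, b ≤ t → x t = z t)
    (hz : ∀ᵐ t ∂volume.restrict (Ioc a (b + τ)), z t - z (t - τ) = u t)
    (hcost : ∫⁻ t in Ioc a (b + τ), ENNReal.ofReal ((x t - x (t - τ)) ^ 2) =
      ∫⁻ t in Ioc a (b + τ), ENNReal.ofReal ((z t - z (t - τ)) ^ 2)) :
    ∀ᵐ t, x t = z t := by
  set I := Ioc a (b + τ)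
  set f : ℝ → ℝ := fun t => x t - x (t - τ)
  set e : ℝ → ℝ := fun t => (x t - z t) - (x (t - τ) - z (t - τ))
  have hya : ∀ t ≤ a, x t - z t = 0 := fun t ht => sub_eq_zero.2 (hxz_a t ht)
  have hyb : ∀ t, b ≤ t → x t - z t = 0 := fun t ht => sub_eq_zero.2 (hxz_b t ht)
  have he_out : ∀ t ∉ I, e t = 0 := fun t ht =>
    sub_shift_eq_zero_of_notMem_Ioc (y := fun t => x t - z t) hτ hya hyb ht
  have he_I : e =ᵐ[volume.restrict I] f - u := by
    filter_upwards [hz] with t ht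
    simp only [e, f, Pi.sub_apply, ← ht]
    ring
  have hsq : ∫⁻ t in I, ENNReal.ofReal (f t ^ 2) = ∫⁻ t in I, ENNReal.ofReal (u t ^ 2) :=
    hcost.trans (lintegral_congr_ae (by filter_upwards [hz] with t ht; rw [ht]))
  have hu2 : MemLp u 2 (volume.restrict I) :=
    MemLp.of_bound hu.aestronglyMeasurable C (ae_of_all _ hu_bdd)
  have hf2 : MemLp f 2 (volume.restrict I) := memLp_two_of_lintegral_sq_eq
    (hx.sub (hx.comp (measurable_sub_const τ))).aestronglyMeasurable hu2 hsq
  have he : Integrable e := by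
    rw [← integrableOn_iff_integrable_of_support_subset (s := I)
      (fun t ht => by_contra fun h => ht (he_out t h))]
    exact ((hf2.integrable one_le_two).sub (hu2.integrable one_le_two)).congr he_I.symm
  have hcross : ∫ t in I, u t * (f t - u t) = 0 := by
    calc ∫ t in I, u t * (f t - u t) = ∫ t in I, u t * e t :=
          integral_congr_ae (he_I.mono fun t ht => by simp only [ht, Pi.sub_apply])
      _ = ∫ t, u t * e t :=
          setIntegral_eq_integral_of_forall_compl_eq_zero fun t ht => by rw [he_out t ht, mul_zero]
      _ = 0 := integral_mul_sub_shift_eq_zero hu_per hu.aestronglyMeasurable hu_bdd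
          (integrable_of_integrable_sub_shift hτ hya hyb he)
  have hsq' : ∫ t in I, f t ^ 2 = ∫ t in I, u t ^ 2 := by
    rw [integral_eq_lintegral_of_nonneg_ae (ae_of_all _ fun t => sq_nonneg _) (hf2.1.pow 2),
      integral_eq_lintegral_of_nonneg_ae (ae_of_all _ fun t => sq_nonneg _) (hu2.1.pow 2), hsq]
  have hfu : f =ᵐ[volume.restrict I] u :=
    ae_eq_of_integral_sq_eq_of_integral_mul_sub_eq_zero hf2 hu2 hsq' hcross
  have he0 : ∀ᵐ t, e t = 0 := by
    refine ae_of_ae_restrict_of_ae_restrict_compl I ?_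
      (ae_restrict_of_forall_mem measurableSet_Ioc.compl he_out)
    filter_upwards [he_I, hfu] with t h1 h2
    rw [h1, Pi.sub_apply, h2, sub_self]
  filter_upwards [ae_eq_zero_of_sub_shift_ae_eq_zero hτ hya hyb he0] with t ht
  exact sub_eq_zero.1 ht

theorem add_one_add_floor_mul_sub_shift {τ : ℝ} {p u : ℝ → ℝ} (hτ : τ ≠ 0) (hp : Periodic p τ)
    (hu : Periodic u τ) (a t : ℝ) :
    p t + (1 + ⌊(t - a) / τ⌋) * u t - (p (t - τ) + (1 + ⌊(t - τ - a) / τ⌋) * u (t - τ)) = u t := by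
  have hfloor : ⌊(t - τ - a) / τ⌋ = ⌊(t - a) / τ⌋ - 1 := by
    rw [← Int.floor_sub_one]
    congr 1
    field_simp
    ring
  rw [hp.sub_eq, hu.sub_eq, hfloor]
  push_cast
  ring

noncomputable def raccordationStep (τ a b : ℝ) (n : ℤ) (xa xb : ℝ → ℝ) (t : ℝ) : ℝ :=
  if (t - a) - τ * (⌊(t - a) / τ⌋ : ℝ) < b - a - n * τ then (xb t - xa t) / ((n : ℝ) + 2)
  else (xb t - xa t) / ((n : ℝ) + 1)

section RaccordationStep

variable {τ a b : ℝ} {n : ℤ} {xa xb : ℝ → ℝ}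

theorem periodic_raccordationStep (hτ : τ ≠ 0) (hxa : Periodic xa τ) (hxb : Periodic xb τ) :
    Periodic (raccordationStep τ a b n xa xb) τ := by
  intro t
  have hfloor : ⌊(t + τ - a) / τ⌋ = ⌊(t - a) / τ⌋ + 1 := by
    rw [← Int.floor_add_one]
    congr 1
    field_simp
    ring
  have hphase : (t + τ - a) - τ * (⌊(t + τ - a) / τ⌋ : ℝ) = (t - a) - τ * (⌊(t - a) / τ⌋ : ℝ) := by
    rw [hfloor]
    push_cast
    ring
  simp only [raccordationStep, hphase, hxa t, hxb t]

theorem measurable_raccordationStep (hxa : Measurable xa) (hxb : Measurable xb) :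
    Measurable (raccordationStep τ a b n xa xb) := by
  unfold raccordationStep
  refine Measurable.ite (measurableSet_lt ?_ measurable_const) (by fun_prop) (by fun_prop)
  fun_prop

theorem norm_raccordationStep_le (hn : 0 ≤ n) (t : ℝ) :
    ‖raccordationStep τ a b n xa xb t‖ ≤ ‖xb t - xa t‖ := by
  have hn' : (0 : ℝ) ≤ n := by exact_mod_cast hn
  simp only [Real.norm_eq_abs, raccordationStep]
  split_ifs
  · rw [abs_div, abs_of_pos (show (0 : ℝ) < n + 2 by linarith)]
    exact div_le_self (abs_nonneg _) (by linarith)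
  · rw [abs_div, abs_of_pos (show (0 : ℝ) < n + 1 by linarith)]
    exact div_le_self (abs_nonneg _) (by linarith)

theorem one_add_floor_mul_raccordationStep (hτ : 0 < τ) (hab : a ≤ b) (hn : n = ⌊(b - a) / τ⌋)
    {t : ℝ} (hbt : b ≤ t) (htb : t < b + τ) :
    (1 + ⌊(t - a) / τ⌋) * raccordationStep τ a b n xa xb t = xb t - xa t := by
  have hn_le : (n : ℝ) * τ ≤ b - a := by
    have := Int.floor_le ((b - a) / τ)
    rw [← hn, le_div_iff₀ hτ] at this
    exact this
  have hn_lt : b - a < (n + 1) * τ := by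
    have := Int.lt_floor_add_one ((b - a) / τ)
    rw [← hn, div_lt_iff₀ hτ] at this
    exact this
  have hn0 : (0 : ℝ) ≤ n := by
    exact_mod_cast hn ▸ Int.floor_nonneg.2 (div_nonneg (sub_nonneg.2 hab) hτ.le)
  have hk : ⌊(t - a) / τ⌋ = n ∨ ⌊(t - a) / τ⌋ = n + 1 := by
    have hlo : n ≤ ⌊(t - a) / τ⌋ := by
      rw [Int.le_floor, le_div_iff₀ hτ]
      linarith
    have hhi : ⌊(t - a) / τ⌋ < n + 2 := by
      rw [Int.floor_lt, div_lt_iff₀ hτ]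
      push_cast
      linarith
    omega
  unfold raccordationStep
  rcases hk with hk | hk <;> rw [hk] <;> push_cast
  · rw [if_neg (by linarith)]
    field_simp
    ring
  · rw [if_pos (by linarith)]
    field_simp
    ring

variable {xstar : ℝ → ℝ}

theorem eq_add_one_add_floor_mul_raccordationStep (hτ : 0 < τ) (hab : a ≤ b)
    (hn : n = ⌊(b - a) / τ⌋) (hxstar_a : ∀ t, t ≤ a → xstar t = xa t)
    (hxstar_mid : ∀ t, a < t → t < b →
      xstar t = xa t + (1 + (⌊(t - a) / τ⌋ : ℝ)) * raccordationStep τ a b n xa xb t)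
    (hxstar_b : ∀ t, b ≤ t → xstar t = xb t) {t : ℝ} (ht : t ∈ Ico (a - τ) a ∪ Ioo a (b + τ)) :
    xstar t = xa t + (1 + (⌊(t - a) / τ⌋ : ℝ)) * raccordationStep τ a b n xa xb t := by
  rcases ht with ⟨hlo, hhi⟩ | ⟨hlo, hhi⟩
  · have hfloor : ⌊(t - a) / τ⌋ = -1 := by
      rw [Int.floor_eq_iff, le_div_iff₀ hτ, div_lt_iff₀ hτ]
      push_cast
      constructor <;> linarith
    rw [hxstar_a t hhi.le, hfloor]
    push_cast
    ring
  · rcases lt_or_ge t b with htb | hbt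
    · exact hxstar_mid t hlo htb
    · rw [hxstar_b t hbt, one_add_floor_mul_raccordationStep hτ hab hn hbt hhi]
      ring

theorem sub_shift_eq_raccordationStep (hτ : 0 < τ) (hab : a ≤ b) (hn : n = ⌊(b - a) / τ⌋)
    (hxa : Periodic xa τ) (hxb : Periodic xb τ) (hxstar_a : ∀ t, t ≤ a → xstar t = xa t)
    (hxstar_mid : ∀ t, a < t → t < b →
      xstar t = xa t + (1 + (⌊(t - a) / τ⌋ : ℝ)) * raccordationStep τ a b n xa xb t)
    (hxstar_b : ∀ t, b ≤ t → xstar t = xb t) {t : ℝ} (ht : t ∈ Ioo a (b + τ))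
    (hta : t ≠ a + τ) :
    xstar t - xstar (t - τ) = raccordationStep τ a b n xa xb t := by
  have hshift : t - τ ∈ Ico (a - τ) a ∪ Ioo a (b + τ) := by
    rcases hta.lt_or_gt with h | h
    · exact Or.inl ⟨by linarith [ht.1], by linarith⟩
    · exact Or.inr ⟨by linarith, by linarith [ht.2]⟩
  rw [eq_add_one_add_floor_mul_raccordationStep hτ hab hn hxstar_a hxstar_mid hxstar_b (Or.inr ht),
    eq_add_one_add_floor_mul_raccordationStep hτ hab hn hxstar_a hxstar_mid hxstar_b hshift]
  exact add_one_add_floor_mul_sub_shift hτ.ne' hxa (periodic_raccordationStep hτ.ne' hxa hxb) a t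

end RaccordationStep

/-- Uniqueness of the Gluskabi raccordation of Theorem 2 up to null sets: any candidate
trajectory achieving the minimal persistence cost `J(x*)` agrees with `x*` almost
everywhere. -/
theorem gluskabi_raccordation_general_unique
    (τ a b : ℝ) (hτ : 0 < τ) (hab : a < b) (n : ℤ) (hn : n = ⌊(b - a) / τ⌋)
    (xa xb : ℝ → ℝ) (hxa : Continuous xa) (hxb : Continuous xb)
    (hxa_per : ∀ t, xa (t + τ) = xa t) (hxb_per : ∀ t, xb (t + τ) = xb t)
    (u₀ : ℝ → ℝ)
    (hu₀ : ∀ t, u₀ t =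
      if (t - a) - τ * (⌊(t - a) / τ⌋ : ℝ) < b - a - n * τ then
        (xb t - xa t) / ((n : ℝ) + 2)
      else (xb t - xa t) / ((n : ℝ) + 1))
    (xstar : ℝ → ℝ)
    (hxstar_a : ∀ t, t ≤ a → xstar t = xa t)
    (hxstar_mid : ∀ t, a < t → t < b →
      xstar t = xa t + (1 + (⌊(t - a) / τ⌋ : ℝ)) * u₀ t)
    (hxstar_b : ∀ t, b ≤ t → xstar t = xb t)
    (x : ℝ → ℝ) (hx : Measurable x)
    (hx_a : ∀ t, t ≤ a → x t = xa t) (hx_b : ∀ t, b ≤ t → x t = xb t)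
    (hcost : (∫⁻ t in Set.Ioc a (b + τ), ENNReal.ofReal ((x t - x (t - τ)) ^ 2)) =
      ∫⁻ t in Set.Ioc a (b + τ), ENNReal.ofReal ((xstar t - xstar (t - τ)) ^ 2)) :
    ∀ᵐ t : ℝ, x t = xstar t := by
  obtain rfl : u₀ = raccordationStep τ a b n xa xb := funext hu₀
  have hn0 : 0 ≤ n := hn ▸ Int.floor_nonneg.2 (div_nonneg (sub_nonneg.2 hab.le) hτ.le)
  have hdiff_per : Periodic (xb - xa) τ := fun t => by simp only [Pi.sub_apply, hxa_per, hxb_per]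
  obtain ⟨C, hC⟩ := (hdiff_per.isBounded_of_continuous hτ.ne' (hxb.sub hxa)).exists_norm_le
  have hincr : ∀ᵐ t ∂volume.restrict (Ioc a (b + τ)),
      xstar t - xstar (t - τ) = raccordationStep τ a b n xa xb t := by
    rw [ae_restrict_iff' measurableSet_Ioc]
    filter_upwards [volume.ae_ne (a + τ), volume.ae_ne (b + τ)] with t hta htb ht
    exact sub_shift_eq_raccordationStep hτ hab.le hn hxa_per hxb_per hxstar_a hxstar_mid hxstar_b
      ⟨ht.1, ht.2.lt_of_ne htb⟩ hta
  exact ae_eq_of_setLIntegral_sq_sub_shift_eq hτ (periodic_raccordationStep hτ.ne' hxa_per hxb_per)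
    (measurable_raccordationStep hxa.measurable hxb.measurable)
    (fun t => (norm_raccordationStep_le hn0 t).trans (hC _ (mem_range_self t))) hx
    (fun t ht => by rw [hx_a t ht, hxstar_a t ht]) (fun t ht => by rw [hx_b t ht, hxstar_b t ht])
    hincr hcost
end
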